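/- arXiv:2411.08435 — 5 statements merged into one kernel-verified Lean document; each statement's English description precedes it below -/
import Mathlib

section
/- Let S and A be nonempty finite sets and let 𝒫 ⊆ Δ(S)^{S×A} be a convex and compact uncertainty set that is weakly s-tractable. Then for every next-state-independent r ∈ ℝ^{S×A×S}, every γ ∈ [0,1) and every μ ∈ Δ(S), strong duality holds: max over stationary π ∈ Δ(A)^S of min_{P∈𝒫} ∑_s μ_s v^{π,P}_s equals min_{P∈𝒫} of max over stationary π ∈ Δ(A)^S of ∑_s μ_s v^{π,P}_s. -/
open scoped BigOperators

namespace RMDP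

variable {S A : Type*} [Fintype S] [Fintype A]

def IsKernel (P : S → A → S → ℝ) : Prop := ∀ s a, P s a ∈ stdSimplex ℝ S

def IsPolicy (π : S → A → ℝ) : Prop := ∀ s, π s ∈ stdSimplex ℝ A

def NextStateIndep (r : S → A → S → ℝ) : Prop :=
  ∀ (s : S) (a : A) (s' s'' : S), r s a s' = r s a s''

noncomputable def minOver {K : Type*} (K0 : Set K) (f : K → ℝ) : ℝ := sInf (f '' K0)

noncomputable def maxOver {K : Type*} (K0 : Set K) (f : K → ℝ) : ℝ := sSup (f '' K0)

noncomputable def TpiP (π : S → A → ℝ) (r : S → A → S → ℝ) (γ : ℝ)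
    (P : S → A → S → ℝ) (v : S → ℝ) : S → ℝ :=
  fun s => ∑ a, π s a * ∑ s', P s a s' * (r s a s' + γ * v s')

noncomputable def Tpi (US : Set (S → A → S → ℝ)) (π : S → A → ℝ)
    (r : S → A → S → ℝ) (γ : ℝ) (v : S → ℝ) : S → ℝ :=
  fun s => minOver US (fun P => ∑ a, π s a * ∑ s', P s a s' * (r s a s' + γ * v s'))

noncomputable def TpiHat (US : Set (S → A → S → ℝ)) (π : S → A → ℝ)
    (r : S → A → S → ℝ) (γ : ℝ) (v : S → ℝ) : S → ℝ :=
  fun s => ∑ a, π s a * minOver US (fun P => ∑ s', P s a s' * (r s a s' + γ * v s'))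

noncomputable def Topt (US : Set (S → A → S → ℝ)) (r : S → A → S → ℝ) (γ : ℝ)
    (v : S → ℝ) : S → ℝ :=
  fun s => maxOver (stdSimplex ℝ A)
    (fun p => minOver US (fun P => ∑ a, p a * ∑ s', P s a s' * (r s a s' + γ * v s')))

def IsHPolicy (π : List (S × A) → S → A → ℝ) : Prop := ∀ h s, π h s ∈ stdSimplex ℝ A

noncomputable def expRHH (π : List (S × A) → S → A → ℝ)
    (Q : List (S × A) → S → A → S → ℝ) (r : S → A → S → ℝ) :
    ℕ → List (S × A) → S → ℝ
  | 0, h, s => ∑ a, π h s a * ∑ s', Q (h ++ [(s, a)]) s a s' * r s a s'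
  | (t + 1), h, s =>
      ∑ a, π h s a * ∑ s', Q (h ++ [(s, a)]) s a s' * expRHH π Q r t (h ++ [(s, a)]) s'

noncomputable def vHH (π : List (S × A) → S → A → ℝ)
    (Q : List (S × A) → S → A → S → ℝ) (r : S → A → S → ℝ) (γ : ℝ) (s : S) : ℝ :=
  ∑' t : ℕ, γ ^ t * expRHH π Q r t [] s

def STractable (US : Set (S → A → S → ℝ)) : Prop :=
  ∀ π : S → A → ℝ, IsPolicy π →
    ∀ (r : S → A → S → ℝ) (γ : ℝ), 0 ≤ γ → γ < 1 →
      ∀ v : (S → A → S → ℝ) → S → ℝ, (∀ P ∈ US, TpiP π r γ P (v P) = v P) →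
        ∀ u : S → ℝ, Tpi US π r γ u = u →
          ∀ μ ∈ stdSimplex ℝ S,
            minOver US (fun P => ∑ s, μ s * v P s) = ∑ s, μ s * u s

def SATractable (US : Set (S → A → S → ℝ)) : Prop :=
  ∀ π : S → A → ℝ, IsPolicy π →
    ∀ (r : S → A → S → ℝ) (γ : ℝ), 0 ≤ γ → γ < 1 →
      ∀ v : (S → A → S → ℝ) → S → ℝ, (∀ P ∈ US, TpiP π r γ P (v P) = v P) →
        ∀ uhat : S → ℝ, TpiHat US π r γ uhat = uhat →
          ∀ μ ∈ stdSimplex ℝ S,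
            minOver US (fun P => ∑ s, μ s * v P s) = ∑ s, μ s * uhat s

def WeakSTractable (US : Set (S → A → S → ℝ)) : Prop :=
  ∀ π : S → A → ℝ, IsPolicy π →
    ∀ (r : S → A → S → ℝ), NextStateIndep r → ∀ γ : ℝ, 0 ≤ γ → γ < 1 →
      ∀ v : (S → A → S → ℝ) → S → ℝ, (∀ P ∈ US, TpiP π r γ P (v P) = v P) →
        ∀ u : S → ℝ, Tpi US π r γ u = u →
          ∀ μ ∈ stdSimplex ℝ S,
            minOver US (fun P => ∑ s, μ s * v P s) = ∑ s, μ s * u s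

def WeakSATractable (US : Set (S → A → S → ℝ)) : Prop :=
  ∀ π : S → A → ℝ, IsPolicy π →
    ∀ (r : S → A → S → ℝ), NextStateIndep r → ∀ γ : ℝ, 0 ≤ γ → γ < 1 →
      ∀ v : (S → A → S → ℝ) → S → ℝ, (∀ P ∈ US, TpiP π r γ P (v P) = v P) →
        ∀ uhat : S → ℝ, TpiHat US π r γ uhat = uhat →
          ∀ μ ∈ stdSimplex ℝ S,
            minOver US (fun P => ∑ s, μ s * v P s) = ∑ s, μ s * uhat s

def SSPs (US : Set (S → A → S → ℝ)) : Prop :=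
  ∀ V : S → A → S → ℝ, ∃ Pstar ∈ US, ∀ s : S, ∀ P ∈ US,
    (∑ a, ∑ s', Pstar s a s' * V s a s') ≤ ∑ a, ∑ s', P s a s' * V s a s'

def SSPsa (US : Set (S → A → S → ℝ)) : Prop :=
  ∀ V : S → A → S → ℝ, ∃ Pstar ∈ US, ∀ (s : S) (a : A), ∀ P ∈ US,
    (∑ s', Pstar s a s' * V s a s') ≤ ∑ s', P s a s' * V s a s'

def WeakSSPs (US : Set (S → A → S → ℝ)) : Prop :=
  ∀ π : S → A → ℝ, IsPolicy π → ∀ V : S → ℝ, ∃ Pstar ∈ US, ∀ s : S, ∀ P ∈ US,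
    (∑ a, π s a * ∑ s', Pstar s a s' * V s') ≤ ∑ a, π s a * ∑ s', P s a s' * V s'

def WeakSSPsa (US : Set (S → A → S → ℝ)) : Prop :=
  ∀ V : S → ℝ, ∃ Pstar ∈ US, ∀ (s : S) (a : A), ∀ P ∈ US,
    (∑ s', Pstar s a s' * V s') ≤ ∑ s', P s a s' * V s'


/-!
Let `u` be the fixed point of the robust optimality operator `Topt`. Choosing at each state a
mixed action that attains the maximum in `Topt u` gives a policy `πo` whose robust value is `u`,
and by comparison `u ≤ v πo P` for every `P ∈ US`. Conversely, some kernel `Po ∈ US` satisfies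
`∑ s', Po s a s' * (r s a s' + γ * u s') ≤ u s` for all `s` and `a`, so `v π Po ≤ u` for every
policy `π`. If there were no such kernel, separating the convex compact set of Bellman residuals
from the nonpositive orthant would give a weighting `ν s * π s a` of state-action pairs under
which every kernel of `US` improves on `u` by a fixed margin. This contradicts weak
s-tractability for `π` and the state reward `u s - γ * min_P ∑ a, π s a * ∑ s', P s a s' * u s'`,
whose robust value is exactly `u`. Hence both sides of the duality equal `∑ s, μ s * u s`.
-/

section Blackwell

variable {ι : Type*} [Fintype ι]

/-- Blackwell's sufficient conditions for a `γ`-contraction in the sup norm. -/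
structure Discounting (γ : ℝ) (f : (ι → ℝ) → ι → ℝ) : Prop where
  monotone : Monotone f
  add_const_le : ∀ (v : ι → ℝ) (c : ℝ), 0 ≤ c → f (v + fun _ => c) ≤ f v + fun _ => γ * c

namespace Discounting

variable {γ : ℝ} {f : (ι → ℝ) → ι → ℝ}

lemma dist_le (hf : Discounting γ f) (hγ : 0 ≤ γ) (v w : ι → ℝ) :
    dist (f v) (f w) ≤ γ * dist v w := by
  have key : ∀ v w : ι → ℝ, ∀ i, f v i - f w i ≤ γ * dist w v := fun v w i => by
    have hle : v ≤ w + fun _ => dist w v := fun j => by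
      have := (abs_le.1 ((Real.dist_eq _ _).symm ▸ dist_le_pi_dist w v j)).1
      simp only [Pi.add_apply]
      linarith
    have := (hf.monotone hle).trans (hf.add_const_le w _ dist_nonneg) i
    simp only [Pi.add_apply] at this
    linarith
  refine (dist_pi_le_iff (by positivity)).2 fun i => ?_
  rw [Real.dist_eq, abs_sub_le_iff]
  exact ⟨dist_comm v w ▸ key v w i, key w v i⟩

lemma exists_isFixedPt (hf : Discounting γ f) (hγ0 : 0 ≤ γ) (hγ1 : γ < 1) :
    ∃ v, f v = v := by
  have hc : ContractingWith γ.toNNReal f :=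
    ⟨by simpa [← NNReal.coe_lt_coe, hγ0] using hγ1, LipschitzWith.of_dist_le_mul fun v w => by
      simpa [Real.coe_toNNReal _ hγ0] using hf.dist_le hγ0 v w⟩
  exact ⟨_, hc.fixedPoint_isFixedPt⟩

lemma le_of_le_of_le (hf : Discounting γ f) (hγ1 : γ < 1) {u w : ι → ℝ}
    (hu : u ≤ f u) (hw : f w ≤ w) : u ≤ w := by
  intro i
  have : Nonempty ι := ⟨i⟩
  obtain ⟨j, -, hj⟩ := Finset.exists_max_image Finset.univ (fun k => u k - w k)
    Finset.univ_nonempty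
  by_contra! hlt
  set M := u j - w j
  have hM : 0 < M := by linarith [hj i (Finset.mem_univ i)]
  have hle : u ≤ w + fun _ => M := fun k => by
    have := hj k (Finset.mem_univ k)
    simp only [Pi.add_apply]
    linarith
  have := (hu.trans ((hf.monotone hle).trans (hf.add_const_le w M hM.le))) j
  have := hw j
  simp only [Pi.add_apply] at *
  nlinarith

end Discounting

end Blackwell

section MinMaxOver

variable {K : Type*} {K0 : Set K} {f g : K → ℝ} {c : ℝ} {k : K}

lemma minOver_le (hb : BddBelow (f '' K0)) (hk : k ∈ K0) : minOver K0 f ≤ f k :=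
  csInf_le hb ⟨k, hk, rfl⟩

lemma le_minOver (hne : K0.Nonempty) (h : ∀ k ∈ K0, c ≤ f k) : c ≤ minOver K0 f :=
  le_csInf (hne.image f) (by rintro _ ⟨k, hk, rfl⟩; exact h k hk)

lemma le_maxOver (hb : BddAbove (f '' K0)) (hk : k ∈ K0) : f k ≤ maxOver K0 f :=
  le_csSup hb ⟨k, hk, rfl⟩

lemma maxOver_le (hne : K0.Nonempty) (h : ∀ k ∈ K0, f k ≤ c) : maxOver K0 f ≤ c :=
  csSup_le (hne.image f) (by rintro _ ⟨k, hk, rfl⟩; exact h k hk)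

lemma minOver_eq_of_forall_le (hk : k ∈ K0) (hfk : f k = c) (h : ∀ k' ∈ K0, c ≤ f k') :
    minOver K0 f = c :=
  IsLeast.csInf_eq ⟨⟨k, hk, hfk⟩, by rintro _ ⟨k', hk', rfl⟩; exact h k' hk'⟩

lemma maxOver_eq_of_forall_le (hk : k ∈ K0) (hfk : f k = c) (h : ∀ k' ∈ K0, f k' ≤ c) :
    maxOver K0 f = c :=
  IsGreatest.csSup_eq ⟨⟨k, hk, hfk⟩, by rintro _ ⟨k', hk', rfl⟩; exact h k' hk'⟩

lemma minOver_le_minOver_add (hne : K0.Nonempty) (hb : BddBelow (f '' K0))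
    (h : ∀ k ∈ K0, f k ≤ g k + c) : minOver K0 f ≤ minOver K0 g + c :=
  sub_le_iff_le_add.1 <| le_minOver hne fun k hk =>
    sub_le_iff_le_add.2 ((minOver_le hb hk).trans (h k hk))

lemma maxOver_le_maxOver_add (hne : K0.Nonempty) (hb : BddAbove (g '' K0))
    (h : ∀ k ∈ K0, f k ≤ g k + c) : maxOver K0 f ≤ maxOver K0 g + c :=
  maxOver_le hne fun k hk => (h k hk).trans (add_le_add_left (le_maxOver hb hk) c)

lemma exists_lt_minOver_add (hne : K0.Nonempty) {ε : ℝ} (hε : 0 < ε) :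
    ∃ k ∈ K0, f k < minOver K0 f + ε := by
  obtain ⟨_, ⟨k, hk, rfl⟩, hlt⟩ := Real.lt_sInf_add_pos (hne.image f) hε
  exact ⟨k, hk, hlt⟩

end MinMaxOver

section Simplex

variable {ι : Type*} [Fintype ι] {p x : ι → ℝ}

lemma stdSimplex_nonempty [Nonempty ι] : (stdSimplex ℝ ι).Nonempty := by
  classical
  exact ⟨_, single_mem_stdSimplex ℝ (Classical.arbitrary ι)⟩

lemma sum_mul_const_of_mem_stdSimplex (hp : p ∈ stdSimplex ℝ ι) (c : ℝ) :
    ∑ i, p i * c = c := by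
  rw [← Finset.sum_mul, hp.2, one_mul]

lemma sum_mul_le_of_mem_stdSimplex (hp : p ∈ stdSimplex ℝ ι) {B : ℝ} (h : ∀ i, x i ≤ B) :
    ∑ i, p i * x i ≤ B :=
  (Finset.sum_le_sum fun i _ => mul_le_mul_of_nonneg_left (h i) (hp.1 i)).trans_eq
    (sum_mul_const_of_mem_stdSimplex hp B)

lemma sum_mul_le_sum_mul_of_nonneg (hp : ∀ i, 0 ≤ p i) {y : ι → ℝ} (h : x ≤ y) :
    ∑ i, p i * x i ≤ ∑ i, p i * y i :=
  Finset.sum_le_sum fun i _ => mul_le_mul_of_nonneg_left (h i) (hp i)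

end Simplex

section Evaluation

variable {π : S → A → ℝ} {r : S → A → S → ℝ} {γ : ℝ} {P : S → A → S → ℝ}

lemma TpiP_add_const (hπ : IsPolicy π) (hP : IsKernel P) (v : S → ℝ) (c : ℝ) :
    TpiP π r γ P (v + fun _ => c) = TpiP π r γ P v + fun _ => γ * c := by
  ext s
  simp only [TpiP, Pi.add_apply]
  rw [← sum_mul_const_of_mem_stdSimplex (hπ s) (γ * c), ← Finset.sum_add_distrib]
  refine Finset.sum_congr rfl fun a _ => ?_
  rw [← mul_add, ← sum_mul_const_of_mem_stdSimplex (hP s a) (γ * c), ← Finset.sum_add_distrib]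
  exact congrArg _ (Finset.sum_congr rfl fun s' _ => by ring)

lemma TpiP_mono (hπ : IsPolicy π) (hP : IsKernel P) (hγ : 0 ≤ γ) :
    Monotone (TpiP π r γ P) := fun v w h s =>
  Finset.sum_le_sum fun a _ => mul_le_mul_of_nonneg_left
    (Finset.sum_le_sum fun s' _ => mul_le_mul_of_nonneg_left
      (by gcongr; exact h s') ((hP s a).1 s')) ((hπ s).1 a)

lemma discounting_TpiP (hπ : IsPolicy π) (hP : IsKernel P) (hγ : 0 ≤ γ) :
    Discounting γ (TpiP π r γ P) :=
  ⟨TpiP_mono hπ hP hγ, fun v c _ => (TpiP_add_const hπ hP v c).le⟩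

lemma continuous_TpiP_kernel (v : S → ℝ) (s : S) :
    Continuous fun P : S → A → S → ℝ => TpiP π r γ P v s := by
  unfold TpiP
  fun_prop

lemma TpiP_of_nextStateIndep (hr : NextStateIndep r) (hP : IsKernel P) (v : S → ℝ) (s : S) :
    TpiP π r γ P v s =
      ∑ a, π s a * r s a s + γ * ∑ a, π s a * ∑ s', P s a s' * v s' := by
  have hrow : ∀ a, ∑ s', P s a s' * (r s a s' + γ * v s') =
      r s a s + γ * ∑ s', P s a s' * v s' := fun a => by
    rw [Finset.mul_sum, ← sum_mul_const_of_mem_stdSimplex (hP s a) (r s a s),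
      ← Finset.sum_add_distrib]
    exact Finset.sum_congr rfl fun s' _ => by rw [hr s a s' s]; ring
  unfold TpiP
  rw [Finset.mul_sum, ← Finset.sum_add_distrib]
  exact Finset.sum_congr rfl fun a _ => by rw [hrow a]; ring

lemma fixedPoint_TpiP_le (hπ : IsPolicy π) (hP : IsKernel P) (hγ0 : 0 ≤ γ) (hγ1 : γ < 1)
    {R : ℝ} (hR : ∀ s a s', r s a s' ≤ R) {v : S → ℝ} (hv : TpiP π r γ P v = v) :
    v ≤ fun _ => R / (1 - γ) := by
  refine (discounting_TpiP hπ hP hγ0).le_of_le_of_le hγ1 hv.ge fun s => ?_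
  refine sum_mul_le_of_mem_stdSimplex (hπ s) fun a =>
    sum_mul_le_of_mem_stdSimplex (hP s a) fun s' => ?_
  have : R + γ * (R / (1 - γ)) = R / (1 - γ) := by field_simp [(sub_pos.2 hγ1).ne']; ring
  linarith [hR s a s']

end Evaluation

section Robust

variable {US : Set (S → A → S → ℝ)} {π : S → A → ℝ} {r : S → A → S → ℝ} {γ : ℝ}

lemma Tpi_apply (v : S → ℝ) (s : S) :
    Tpi US π r γ v s = minOver US fun P => TpiP π r γ P v s := rfl

lemma Tpi_le_TpiP (hcpt : IsCompact US) {P : S → A → S → ℝ} (hP : P ∈ US) (v : S → ℝ) :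
    Tpi US π r γ v ≤ TpiP π r γ P v := fun s =>
  minOver_le (hcpt.bddBelow_image (continuous_TpiP_kernel v s).continuousOn) hP

lemma discounting_Tpi (hne : US.Nonempty) (hcpt : IsCompact US)
    (hker : ∀ P ∈ US, IsKernel P) (hπ : IsPolicy π) (hγ : 0 ≤ γ) :
    Discounting γ (Tpi US π r γ) := by
  have key : ∀ (v w : S → ℝ) (c : ℝ) (s : S), (∀ P ∈ US, TpiP π r γ P v s ≤ TpiP π r γ P w s + c) →
      Tpi US π r γ v s ≤ Tpi US π r γ w s + c := fun v w c s =>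
    minOver_le_minOver_add hne (hcpt.bddBelow_image (continuous_TpiP_kernel v s).continuousOn)
  refine ⟨fun v w h s => ?_, fun v c _ s => ?_⟩
  · simpa using key v w 0 s fun P hP => by simpa using TpiP_mono hπ (hker P hP) hγ h s
  · exact key _ _ _ s fun P hP => (congrFun (TpiP_add_const hπ (hker P hP) v c) s).le

lemma continuous_Tpi_row (hcpt : IsCompact US) (v : S → ℝ) (s : S) :
    Continuous fun p : A → ℝ => Tpi US (fun _ => p) r γ v s :=
  hcpt.continuous_sInf (f := fun p P => TpiP (fun _ => p) r γ P v s) (by unfold TpiP; fun_prop)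

lemma Tpi_le_Topt (hcpt : IsCompact US) (hπ : IsPolicy π) (v : S → ℝ) :
    Tpi US π r γ v ≤ Topt US r γ v := fun s =>
  le_maxOver ((isCompact_stdSimplex ℝ A).bddAbove_image
    (continuous_Tpi_row hcpt v s).continuousOn) (hπ s)

variable [Nonempty A]

lemma discounting_Topt (hne : US.Nonempty) (hcpt : IsCompact US)
    (hker : ∀ P ∈ US, IsKernel P) (hγ : 0 ≤ γ) : Discounting γ (Topt US r γ) := by
  have key : ∀ (v w : S → ℝ) (c : ℝ) (s : S), (∀ p ∈ stdSimplex ℝ A,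
      Tpi US (fun _ => p) r γ v s ≤ Tpi US (fun _ => p) r γ w s + c) →
      Topt US r γ v s ≤ Topt US r γ w s + c := fun v w c s =>
    maxOver_le_maxOver_add stdSimplex_nonempty
      ((isCompact_stdSimplex ℝ A).bddAbove_image (continuous_Tpi_row hcpt w s).continuousOn)
  have hTpi : ∀ p ∈ stdSimplex ℝ A, Discounting γ (Tpi US (fun _ => p) r γ) := fun p hp =>
    discounting_Tpi hne hcpt hker (fun _ => hp) hγ
  refine ⟨fun v w h s => ?_, fun v c hc s => ?_⟩
  · simpa using key v w 0 s fun p hp => by simpa using (hTpi p hp).monotone h s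
  · exact key _ _ _ s fun p hp => (hTpi p hp).add_const_le v c hc s

lemma exists_policy_Tpi_eq_Topt (hcpt : IsCompact US) (v : S → ℝ) :
    ∃ π, IsPolicy π ∧ Tpi US π r γ v = Topt US r γ v := by
  have hmax : ∀ s, ∃ p ∈ stdSimplex ℝ A,
      IsMaxOn (fun p => Tpi US (fun _ => p) r γ v s) (stdSimplex ℝ A) p := fun s =>
    (isCompact_stdSimplex ℝ A).exists_isMaxOn stdSimplex_nonempty
      (continuous_Tpi_row hcpt v s).continuousOn
  choose π hπ hπmax using hmax
  exact ⟨π, hπ, funext fun s =>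
    (maxOver_eq_of_forall_le (hπ s) rfl fun p hp => isMaxOn_iff.1 (hπmax s) p hp).symm⟩

end Robust

section Separation

variable {ι : Type*} [Fintype ι]

/-- Gordan-type alternative, from separating `D` from the nonpositive orthant. -/
lemma exists_mem_stdSimplex_forall_le_sum_mul {D : Set (ι → ℝ)} (hne : D.Nonempty)
    (hconv : Convex ℝ D) (hcpt : IsCompact D) (h : ∀ d ∈ D, ∃ i, 0 < d i) :
    ∃ w ∈ stdSimplex ℝ ι, ∃ δ > 0, ∀ d ∈ D, δ ≤ ∑ i, w i * d i := by
  classical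
  have hdisj : Disjoint (Set.Iic 0) D := Set.disjoint_left.2 fun x hx hxD => by
    obtain ⟨i, hi⟩ := h x hxD
    exact (hx i).not_gt hi
  obtain ⟨F, u, v, hFu, huv, hFv⟩ :=
    geometric_hahn_banach_closed_compact (convex_Iic 0) isClosed_Iic hconv hcpt hdisj
  set w₀ : ι → ℝ := fun i => F fun j => if i = j then 1 else 0
  have hF : ∀ x, F x = ∑ i, w₀ i * x i := fun x => by
    simpa [mul_comm] using (F : (ι → ℝ) →ₗ[ℝ] ℝ).pi_apply_eq_sum_univ x
  have hu : 0 < u := by simpa using hFu 0 Set.self_mem_Iic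
  have hw₀ : ∀ i, 0 ≤ w₀ i := fun i => by
    by_contra! hi
    have hmem : (u / w₀ i) • (fun j => if i = j then (1 : ℝ) else 0) ∈ Set.Iic 0 :=
      Set.mem_Iic.2 <| smul_nonpos_of_nonpos_of_nonneg (div_neg_of_pos_of_neg hu hi).le
        (ite_eq_mem_stdSimplex ℝ i).1
    have := hFu _ hmem
    rw [map_smul, smul_eq_mul, div_mul_cancel₀ _ hi.ne] at this
    exact this.false
  obtain ⟨d₀, hd₀⟩ := hne
  have hT : 0 < ∑ i, w₀ i := by
    by_contra! hT
    have hzero := (Finset.sum_eq_zero_iff_of_nonneg fun i _ => hw₀ i).1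
      (hT.antisymm (Finset.sum_nonneg fun i _ => hw₀ i))
    have := hFv d₀ hd₀
    simp only [hF, hzero _ (Finset.mem_univ _), zero_mul, Finset.sum_const_zero] at this
    linarith
  refine ⟨fun i => w₀ i / ∑ j, w₀ j,
    ⟨fun i => div_nonneg (hw₀ i) hT.le, by rw [← Finset.sum_div, div_self hT.ne']⟩,
    v / ∑ j, w₀ j, div_pos (hu.trans huv) hT, fun d hd => ?_⟩
  simp only [div_mul_eq_mul_div, ← Finset.sum_div, ← hF]
  exact div_le_div_of_nonneg_right (hFv d hd).le hT.le

end Separation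

lemma exists_disintegration_of_mem_stdSimplex [Nonempty A] {Λ : S × A → ℝ}
    (hΛ : Λ ∈ stdSimplex ℝ (S × A)) :
    ∃ ν ∈ stdSimplex ℝ S, ∃ π, IsPolicy π ∧ ∀ s a, Λ (s, a) = ν s * π s a := by
  classical
  obtain ⟨p₀, hp₀⟩ := stdSimplex_nonempty (ι := A)
  set ν : S → ℝ := fun s => ∑ a, Λ (s, a)
  have hν : ∀ s, 0 ≤ ν s := fun s => Finset.sum_nonneg fun a _ => hΛ.1 (s, a)
  refine ⟨ν, ⟨hν, by rw [← hΛ.2, Fintype.sum_prod_type]⟩,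
    fun s => if ν s = 0 then p₀ else fun a => Λ (s, a) / ν s, fun s => ?_, fun s a => ?_⟩ <;>
    by_cases hs : ν s = 0 <;> simp only [hs, if_true, if_false]
  · exact hp₀
  · exact ⟨fun a => div_nonneg (hΛ.1 (s, a)) (hν s), by rw [← Finset.sum_div, div_self hs]⟩
  · rw [zero_mul]
    exact (Finset.sum_eq_zero_iff_of_nonneg fun a _ => hΛ.1 (s, a)).1 hs a (Finset.mem_univ a)
  · rw [mul_div_cancel₀ _ hs]

section Tractability

variable {US : Set (S → A → S → ℝ)} {π : S → A → ℝ} {r : S → A → S → ℝ} {γ : ℝ} {u : S → ℝ}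

/-- The witness is `c s = u s - γ * min_{P ∈ US} ∑ a, π s a * ∑ s', P s a s' * u s'`. -/
lemma exists_stateReward_Tpi_eq_self (hne : US.Nonempty) (hcpt : IsCompact US)
    (hker : ∀ P ∈ US, IsKernel P) (hr : NextStateIndep r) (hγ : 0 ≤ γ) (hπ : IsPolicy π)
    (hu : Tpi US π r γ u ≤ u) :
    ∃ c : S → ℝ, Tpi US π (fun s _ _ => c s) γ u = u ∧ ∀ P ∈ US,
      u ≤ TpiP π (fun s _ _ => c s) γ P u ∧ TpiP π r γ P u ≤ TpiP π (fun s _ _ => c s) γ P u := by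
  set g : (S → A → S → ℝ) → S → ℝ := fun P s => ∑ a, π s a * ∑ s', P s a s' * u s'
  have hmin : ∀ s, ∃ P ∈ US, IsMinOn (fun P => g P s) US P := fun s =>
    hcpt.exists_isMinOn hne (by fun_prop : Continuous fun P => g P s).continuousOn
  choose Pmin hPmin hPmin_le using hmin
  have hg : ∀ s, ∀ P ∈ US, g (Pmin s) s ≤ g P s := fun s P hP => isMinOn_iff.1 (hPmin_le s) P hP
  set c : S → ℝ := fun s => u s - γ * g (Pmin s) s
  have hc : ∀ P ∈ US, ∀ s, TpiP π (fun s _ _ => c s) γ P u s = u s + γ * (g P s - g (Pmin s) s) :=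
    fun P hP s => by
      rw [TpiP_of_nextStateIndep (fun _ _ _ _ => rfl) (hker P hP),
        sum_mul_const_of_mem_stdSimplex (hπ s)]
      ring
  have hle : ∀ P ∈ US, u ≤ TpiP π (fun s _ _ => c s) γ P u := fun P hP s => by
    rw [hc P hP s]
    nlinarith [hg s P hP]
  refine ⟨c, funext fun s => ?_, fun P hP => ⟨hle P hP, fun s => ?_⟩⟩
  · refine le_antisymm ((Tpi_le_TpiP hcpt (hPmin s) u s).trans ?_)
      (le_minOver hne fun P hP => hle P hP s)
    rw [hc _ (hPmin s)]
    simp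
  · have hTpi : Tpi US π r γ u s = TpiP π r γ (Pmin s) u s :=
      (Tpi_apply u s).trans <| minOver_eq_of_forall_le (hPmin s) rfl fun P hP => by
        rw [TpiP_of_nextStateIndep hr (hker _ (hPmin s)), TpiP_of_nextStateIndep hr (hker P hP)]
        exact add_le_add_right (mul_le_mul_of_nonneg_left (hg s P hP) hγ) _
    have := hu s
    rw [hTpi, TpiP_of_nextStateIndep hr (hker _ (hPmin s))] at this
    rw [hc P hP s, TpiP_of_nextStateIndep hr (hker P hP)]
    linarith

lemma exists_mem_sum_mul_TpiP_sub_lt (hne : US.Nonempty) (hcpt : IsCompact US)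
    (hker : ∀ P ∈ US, IsKernel P) (hws : WeakSTractable US) (hr : NextStateIndep r)
    (hγ0 : 0 ≤ γ) (hγ1 : γ < 1) (hπ : IsPolicy π) (hu : Tpi US π r γ u ≤ u)
    {ν : S → ℝ} (hν : ν ∈ stdSimplex ℝ S) {δ : ℝ} (hδ : 0 < δ) :
    ∃ P ∈ US, ∑ s, ν s * (TpiP π r γ P u s - u s) < δ := by
  obtain ⟨c, hcu, hc⟩ := exists_stateReward_Tpi_eq_self hne hcpt hker hr hγ0 hπ hu
  have hfix : ∀ P ∈ US, ∃ w, TpiP π (fun s _ _ => c s) γ P w = w := fun P hP =>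
    (discounting_TpiP hπ (hker P hP) hγ0).exists_isFixedPt hγ0 hγ1
  choose! w hw using hfix
  -- `u ≤ w P` by comparison, hence `TpiP π c γ P u ≤ TpiP π c γ P (w P) = w P`
  have hTw : ∀ P ∈ US, TpiP π r γ P u ≤ w P := fun P hP => by
    have hD := discounting_TpiP hπ (hker P hP) hγ0 (r := fun s _ _ => c s)
    exact (hc P hP).2.trans ((hD.monotone (hD.le_of_le_of_le hγ1 (hc P hP).1 (hw P hP).le)).trans
      (hw P hP).le)
  obtain ⟨P, hP, hlt⟩ := exists_lt_minOver_add hne hδ (f := fun P => ∑ s, ν s * w P s)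
  rw [hws π hπ _ (fun _ _ _ _ => rfl) γ hγ0 hγ1 w hw u hcu ν hν] at hlt
  refine ⟨P, hP, ?_⟩
  calc ∑ s, ν s * (TpiP π r γ P u s - u s) ≤ ∑ s, ν s * (w P s - u s) :=
        sum_mul_le_sum_mul_of_nonneg hν.1 fun s => by linarith [hTw P hP s]
    _ = ∑ s, ν s * w P s - ∑ s, ν s * u s := by simp only [mul_sub, Finset.sum_sub_distrib]
    _ < δ := by linarith

end Tractability

lemma exists_mem_forall_sum_le_of_Topt_eq_self [Nonempty A] {US : Set (S → A → S → ℝ)}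
    {r : S → A → S → ℝ} {γ : ℝ} {u : S → ℝ} (hne : US.Nonempty) (hcpt : IsCompact US)
    (hconv : Convex ℝ US) (hker : ∀ P ∈ US, IsKernel P) (hws : WeakSTractable US)
    (hr : NextStateIndep r) (hγ0 : 0 ≤ γ) (hγ1 : γ < 1) (hu : Topt US r γ u = u) :
    ∃ P ∈ US, ∀ s a, ∑ s', P s a s' * (r s a s' + γ * u s') ≤ u s := by
  by_contra! hcon
  set F : (S → A → S → ℝ) → S × A → ℝ :=
    fun P sa => ∑ s', P sa.1 sa.2 s' * (r sa.1 sa.2 s' + γ * u s') - u sa.1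
  have hFc : Continuous F := by fun_prop
  have hFconv : Convex ℝ (F '' US) := by
    rintro _ ⟨P, hP, rfl⟩ _ ⟨Q, hQ, rfl⟩ a b ha hb hab
    refine ⟨a • P + b • Q, hconv hP hQ ha hb hab, funext fun sa => ?_⟩
    simp only [F, Pi.add_apply, Pi.smul_apply, smul_eq_mul, add_mul, Finset.sum_add_distrib,
      mul_assoc, ← Finset.mul_sum]
    linear_combination (u sa.1) * hab
  obtain ⟨Λ, hΛ, δ, hδ, hsep⟩ := exists_mem_stdSimplex_forall_le_sum_mul (hne.image F) hFconv
    (hcpt.image hFc) (by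
      rintro _ ⟨P, hP, rfl⟩
      obtain ⟨s, a, h⟩ := hcon P hP
      exact ⟨(s, a), sub_pos.2 h⟩)
  obtain ⟨ν, hν, π, hπ, hΛν⟩ := exists_disintegration_of_mem_stdSimplex hΛ
  obtain ⟨P, hP, hlt⟩ := exists_mem_sum_mul_TpiP_sub_lt hne hcpt hker hws hr hγ0 hγ1 hπ
    ((Tpi_le_Topt hcpt hπ u).trans hu.le) hν hδ
  have hsum : ∑ sa, Λ sa * F P sa = ∑ s, ν s * (TpiP π r γ P u s - u s) := by
    rw [Fintype.sum_prod_type]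
    refine Finset.sum_congr rfl fun s _ => ?_
    conv_rhs => rw [← sum_mul_const_of_mem_stdSimplex (hπ s) (u s)]
    rw [TpiP, ← Finset.sum_sub_distrib, Finset.mul_sum]
    exact Finset.sum_congr rfl fun a _ => by rw [hΛν]; ring
  linarith [hsep (F P) ⟨P, hP, rfl⟩]

section Duality

variable [Nonempty A] {US : Set (S → A → S → ℝ)} {r : S → A → S → ℝ} {γ : ℝ} {u : S → ℝ}
  {v : (S → A → ℝ) → (S → A → S → ℝ) → S → ℝ} {μ : S → ℝ}

lemma maxOver_minOver_eq_of_Topt_eq_self (hne : US.Nonempty) (hcpt : IsCompact US)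
    (hker : ∀ P ∈ US, IsKernel P) (hws : WeakSTractable US) (hr : NextStateIndep r)
    (hγ0 : 0 ≤ γ) (hγ1 : γ < 1)
    (hv : ∀ π : S → A → ℝ, IsPolicy π → ∀ P ∈ US, TpiP π r γ P (v π P) = v π P)
    (hu : Topt US r γ u = u) (hμ : μ ∈ stdSimplex ℝ S) :
    maxOver {π : S → A → ℝ | IsPolicy π} (fun π => minOver US fun P => ∑ s, μ s * v π P s) =
      ∑ s, μ s * u s := by
  obtain ⟨πo, hπo, hπou⟩ := exists_policy_Tpi_eq_Topt (r := r) (γ := γ) hcpt u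
  refine maxOver_eq_of_forall_le hπo
    (hws πo hπo r hr γ hγ0 hγ1 (v πo) (hv πo hπo) u (hπou.trans hu) μ hμ) fun π hπ => ?_
  have hD := discounting_Tpi hne hcpt hker hπ hγ0 (r := r)
  obtain ⟨w, hw⟩ := hD.exists_isFixedPt hγ0 hγ1
  rw [hws π hπ r hr γ hγ0 hγ1 (v π) (hv π hπ) w hw μ hμ]
  exact sum_mul_le_sum_mul_of_nonneg hμ.1
    (hD.le_of_le_of_le hγ1 hw.ge ((Tpi_le_Topt hcpt hπ u).trans hu.le))

lemma minOver_maxOver_eq_of_Topt_eq_self (hne : US.Nonempty) (hcpt : IsCompact US)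
    (hconv : Convex ℝ US) (hker : ∀ P ∈ US, IsKernel P) (hws : WeakSTractable US)
    (hr : NextStateIndep r) (hγ0 : 0 ≤ γ) (hγ1 : γ < 1)
    (hv : ∀ π : S → A → ℝ, IsPolicy π → ∀ P ∈ US, TpiP π r γ P (v π P) = v π P)
    (hu : Topt US r γ u = u) (hμ : μ ∈ stdSimplex ℝ S) :
    minOver US (fun P => maxOver {π : S → A → ℝ | IsPolicy π} fun π => ∑ s, μ s * v π P s) =
      ∑ s, μ s * u s := by
  obtain ⟨πo, hπo, hπou⟩ := exists_policy_Tpi_eq_Topt (r := r) (γ := γ) hcpt u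
  obtain ⟨Po, hPo, hPou⟩ :=
    exists_mem_forall_sum_le_of_Topt_eq_self hne hcpt hconv hker hws hr hγ0 hγ1 hu
  have hπo_le : ∀ P ∈ US, u ≤ v πo P := fun P hP =>
    (discounting_TpiP hπo (hker P hP) hγ0).le_of_le_of_le hγ1
      ((hπou.trans hu).symm.le.trans (Tpi_le_TpiP hcpt hP u)) (hv πo hπo P hP).le
  have hle_Po : ∀ π, IsPolicy π → v π Po ≤ u := fun π hπ =>
    (discounting_TpiP hπ (hker Po hPo) hγ0).le_of_le_of_le hγ1 (hv π hπ Po hPo).ge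
      fun s => sum_mul_le_of_mem_stdSimplex (hπ s) (hPou s)
  obtain ⟨R, hR⟩ := (Set.finite_range fun x : S × A × S => r x.1 x.2.1 x.2.2).bddAbove
  have hbdd : ∀ P ∈ US,
      BddAbove ((fun π => ∑ s, μ s * v π P s) '' {π : S → A → ℝ | IsPolicy π}) :=
    fun P hP => ⟨R / (1 - γ), by
      rintro _ ⟨π, hπ, rfl⟩
      exact sum_mul_le_of_mem_stdSimplex hμ <| fixedPoint_TpiP_le hπ (hker P hP) hγ0 hγ1
        (fun s a s' => hR ⟨(s, a, s'), rfl⟩) (hv π hπ P hP)⟩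
  refine minOver_eq_of_forall_le hPo ?_ fun P hP =>
    (sum_mul_le_sum_mul_of_nonneg hμ.1 (hπo_le P hP)).trans (le_maxOver (hbdd P hP) hπo)
  exact maxOver_eq_of_forall_le hπo
    ((sum_mul_le_sum_mul_of_nonneg hμ.1 (hle_Po πo hπo)).antisymm
      (sum_mul_le_sum_mul_of_nonneg hμ.1 (hπo_le Po hPo)))
    fun π hπ => sum_mul_le_sum_mul_of_nonneg hμ.1 (hle_Po π hπ)

end Duality

theorem stmt10_general {S A : Type*} [Fintype S] [Fintype A] [Nonempty A]
    (US : Set (S → A → S → ℝ)) (hne : US.Nonempty) (hker : ∀ P ∈ US, IsKernel P)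
    (hcpt : IsCompact US) (hconv : Convex ℝ US) (hws : WeakSTractable US)
    (r : S → A → S → ℝ) (hr : NextStateIndep r) (γ : ℝ) (hγ0 : 0 ≤ γ) (hγ1 : γ < 1)
    (v : (S → A → ℝ) → (S → A → S → ℝ) → S → ℝ)
    (hv : ∀ π : S → A → ℝ, IsPolicy π → ∀ P ∈ US, TpiP π r γ P (v π P) = v π P) :
    ∀ μ ∈ stdSimplex ℝ S,
      maxOver {π : S → A → ℝ | IsPolicy π}
          (fun π => minOver US (fun P => ∑ s, μ s * v π P s)) =
        minOver US (fun P =>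
          maxOver {π : S → A → ℝ | IsPolicy π} (fun π => ∑ s, μ s * v π P s)) := by
  intro μ hμ
  obtain ⟨u, hu⟩ := (discounting_Topt (r := r) hne hcpt hker hγ0).exists_isFixedPt hγ0 hγ1
  rw [maxOver_minOver_eq_of_Topt_eq_self hne hcpt hker hws hr hγ0 hγ1 hv hu hμ,
    minOver_maxOver_eq_of_Topt_eq_self hne hcpt hconv hker hws hr hγ0 hγ1 hv hu hμ]

theorem stmt10 {S A : Type*} [Fintype S] [Fintype A] [Nonempty S] [Nonempty A]
    (US : Set (S → A → S → ℝ)) (hne : US.Nonempty) (hker : ∀ P ∈ US, IsKernel P)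
    (hcpt : IsCompact US) (hconv : Convex ℝ US) (hws : WeakSTractable US)
    (r : S → A → S → ℝ) (hr : NextStateIndep r) (γ : ℝ) (hγ0 : 0 ≤ γ) (hγ1 : γ < 1)
    (v : (S → A → ℝ) → (S → A → S → ℝ) → S → ℝ)
    (hv : ∀ π : S → A → ℝ, IsPolicy π → ∀ P ∈ US, TpiP π r γ P (v π P) = v π P) :
    ∀ μ ∈ stdSimplex ℝ S,
      maxOver {π : S → A → ℝ | IsPolicy π}
          (fun π => minOver US (fun P => ∑ s, μ s * v π P s)) =
        minOver US (fun P =>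
          maxOver {π : S → A → ℝ | IsPolicy π} (fun π => ∑ s, μ s * v π P s)) :=
  stmt10_general US hne hker hcpt hconv hws r hr γ hγ0 hγ1 v hv

end RMDP
end

section
/- Let S and A be nonempty finite sets, and suppose the state set is partitioned as S = S₁ ∪ S₂ with S₁ ∩ S₂ = ∅. For each s ∈ S₁ let 𝒫_s ⊆ Δ(S)^A be nonempty and compact; let m ≥ 1, let W^1,…,W^m ⊆ Δ(S) be nonempty and compact, and for each s ∈ S₂ and a ∈ A fix coefficients u_{sa} ∈ Δ({1,…,m}). Define 𝒫 as the set of transition kernels P such that (P_{sa})_{a∈A} ∈ 𝒫_s for every s ∈ S₁, and such that there exist w^i ∈ W^i (i = 1,…,m) with P_{sa} = ∑_{i=1}^m u^i_{sa} w^i for every s ∈ S₂ and a ∈ A (with the same factors w^1,…,w^m across all of S₂). Then 𝒫 satisfies the weak SSP. -/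
open scoped BigOperators

namespace RMDP

variable {S A : Type*} [Fintype S] [Fintype A]

theorem stmt14 {S A : Type*} [Fintype S] [Fintype A] [Nonempty S] [Nonempty A]
    (S1 S2 : Set S) (hpart : S1 ∪ S2 = Set.univ) (hdisj : Disjoint S1 S2)
    (USs : S → Set (A → S → ℝ))
    (hUSs : ∀ s ∈ S1, (USs s).Nonempty ∧ IsCompact (USs s) ∧
      ∀ q ∈ USs s, ∀ a : A, q a ∈ stdSimplex ℝ S)
    (m : ℕ) (hm : 1 ≤ m)
    (W : Fin m → Set (S → ℝ))
    (hW : ∀ i, (W i).Nonempty ∧ IsCompact (W i) ∧ W i ⊆ stdSimplex ℝ S)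
    (u : S → A → Fin m → ℝ) (hu : ∀ s ∈ S2, ∀ a : A, u s a ∈ stdSimplex ℝ (Fin m))
    (US : Set (S → A → S → ℝ))
    (hUS : US = {P : S → A → S → ℝ | IsKernel P ∧ (∀ s ∈ S1, P s ∈ USs s) ∧
      ∃ w : Fin m → S → ℝ, (∀ i, w i ∈ W i) ∧
        ∀ s ∈ S2, ∀ a : A, P s a = fun s' => ∑ i, u s a i * w i s'}) :
    WeakSSPs US := by
  classical
  subst hUS
  intro π hπ V
  -- minimizers on S1
  have hq : ∀ s, s ∈ S1 → ∃ q ∈ USs s, ∀ q' ∈ USs s,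
      (∑ a, π s a * ∑ s', q a s' * V s') ≤ ∑ a, π s a * ∑ s', q' a s' * V s' := by
    intro s hs
    obtain ⟨hne, hcpt, _⟩ := hUSs s hs
    have hcont : Continuous (fun q : A → S → ℝ => ∑ a, π s a * ∑ s', q a s' * V s') := by
      continuity
    obtain ⟨q, hqmem, hqmin⟩ := hcpt.exists_isMinOn hne hcont.continuousOn
    exact ⟨q, hqmem, fun q' hq' => hqmin hq'⟩
  choose qf hqmem hqmin using hq
  -- minimizers for the w's
  have hw : ∀ i, ∃ w ∈ W i, ∀ w' ∈ W i,
      (∑ s', w s' * V s') ≤ ∑ s', w' s' * V s' := by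
    intro i
    obtain ⟨hne, hcpt, _⟩ := hW i
    have hcont : Continuous (fun w : S → ℝ => ∑ s', w s' * V s') := by continuity
    obtain ⟨w, hwmem, hwmin⟩ := hcpt.exists_isMinOn hne hcont.continuousOn
    exact ⟨w, hwmem, fun w' hw' => hwmin hw'⟩
  choose wf hwmem hwmin using hw
  set Pstar : S → A → S → ℝ :=
    fun s => if hs : s ∈ S1 then qf s hs else fun a s' => ∑ i, u s a i * wf i s' with hPstar
  have hS2 : ∀ s : S, s ∉ S1 → s ∈ S2 := by
    intro s hs
    have : s ∈ S1 ∪ S2 := hpart ▸ Set.mem_univ s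
    exact this.resolve_left hs
  have hwsimp : ∀ i, wf i ∈ stdSimplex ℝ S := fun i => (hW i).2.2 (hwmem i)
  refine ⟨Pstar, ⟨?_, ?_, ?_⟩, ?_⟩
  · -- IsKernel
    intro s a
    by_cases hs : s ∈ S1
    · simp only [hPstar, dif_pos hs]
      exact (hUSs s hs).2.2 _ (hqmem s hs) a
    · simp only [hPstar, dif_neg hs]
      have hs2 := hS2 s hs
      have hus := hu s hs2 a
      constructor
      · intro s'
        exact Finset.sum_nonneg fun i _ => mul_nonneg (hus.1 i) ((hwsimp i).1 s')
      · rw [Finset.sum_comm]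
        have : ∀ i ∈ Finset.univ, (∑ s', u s a i * wf i s') = u s a i := by
          intro i _
          rw [← Finset.mul_sum, (hwsimp i).2, mul_one]
        rw [Finset.sum_congr rfl this, hus.2]
  · -- rows on S1
    intro s hs
    simp only [hPstar, dif_pos hs]
    exact hqmem s hs
  · -- witness w
    refine ⟨wf, hwmem, ?_⟩
    intro s hs2 a
    have hs : s ∉ S1 := fun h => (hdisj.le_bot ⟨h, hs2⟩).elim
    simp only [hPstar, dif_neg hs]
  · -- minimality
    intro s P hP
    obtain ⟨hPk, hPS1, w', hw'mem, hw'eq⟩ := hP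
    by_cases hs : s ∈ S1
    · simp only [hPstar, dif_pos hs]
      exact hqmin s hs _ (hPS1 s hs)
    · have hs2 := hS2 s hs
      have hrew : ∀ (w : Fin m → S → ℝ),
          (∑ a, π s a * ∑ s', (∑ i, u s a i * w i s') * V s') =
          ∑ a, π s a * ∑ i, u s a i * ∑ s', w i s' * V s' := by
        intro w
        refine Finset.sum_congr rfl fun a _ => ?_
        congr 1
        calc (∑ s', (∑ i, u s a i * w i s') * V s')
            = ∑ s', ∑ i, u s a i * w i s' * V s' := by
              exact Finset.sum_congr rfl fun s' _ => by rw [Finset.sum_mul]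
          _ = ∑ i, ∑ s', u s a i * w i s' * V s' := Finset.sum_comm
          _ = ∑ i, u s a i * ∑ s', w i s' * V s' := by
              refine Finset.sum_congr rfl fun i _ => ?_
              rw [Finset.mul_sum]
              exact Finset.sum_congr rfl fun s' _ => by ring
      have hL : (∑ a, π s a * ∑ s', Pstar s a s' * V s') =
          ∑ a, π s a * ∑ i, u s a i * ∑ s', wf i s' * V s' := by
        have : Pstar s = fun a s' => ∑ i, u s a i * wf i s' := by
          simp only [hPstar, dif_neg hs]
        rw [this]
        exact hrew wf
      have hR : (∑ a, π s a * ∑ s', P s a s' * V s') =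
          ∑ a, π s a * ∑ i, u s a i * ∑ s', w' i s' * V s' := by
        have : ∀ a, P s a = fun s' => ∑ i, u s a i * w' i s' := hw'eq s hs2
        calc (∑ a, π s a * ∑ s', P s a s' * V s')
            = ∑ a, π s a * ∑ s', (∑ i, u s a i * w' i s') * V s' := by
              refine Finset.sum_congr rfl fun a _ => ?_
              rw [this a]
          _ = _ := hrew w'
      rw [hL, hR]
      refine Finset.sum_le_sum fun a _ => ?_
      refine mul_le_mul_of_nonneg_left ?_ ((hπ s).1 a)
      refine Finset.sum_le_sum fun i _ => ?_
      exact mul_le_mul_of_nonneg_left (hwmin i _ (hw'mem i)) ((hu s hs2 a).1 i)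


end RMDP
end

section
/- Let S and A be nonempty finite sets, let m ≥ 1, let W^1,…,W^m ⊆ Δ(S) be nonempty compact sets, and for each s ∈ S let U^s ⊆ Δ({1,…,m})^A be a nonempty compact set. Define 𝒫 = {(∑_{i=1}^m u^i_{sa} w^i)_{(s,a)∈S×A} : w^i ∈ W^i for each i = 1,…,m, and (u^i_{sa})_{i∈{1,…,m},a∈A} ∈ U^s for each s ∈ S}. Then 𝒫 satisfies the weak SSP. -/
/-! For a kernel `P s a = ∑ i, u s a i • w i` the weak-SSP objective at `s` is
`∑ a, π s a * ∑ i, u s a i * ⟪w i, V⟫`, which is monotone in each `⟪w i, V⟫` because the weights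
are nonnegative. So first choose each `w i ∈ W i` minimising `⟪w i, V⟫` (a choice independent of
`s`), then for every state `s` a `u s ∈ U s` minimising the resulting objective; by compactness
both minima are attained, and the kernel built from them is minimal at every state at once. -/

open scoped BigOperators

namespace RMDP

variable {S A : Type*} [Fintype S] [Fintype A]

section Mixture

variable {S A ι : Type*} [Fintype S] [Fintype A] [Fintype ι]

def mixtureKernels (W : ι → Set (S → ℝ)) (U : S → Set (A → ι → ℝ)) :
    Set (S → A → S → ℝ) :=
  {P | ∃ (w : ι → S → ℝ) (u : S → A → ι → ℝ), (∀ i, w i ∈ W i) ∧ (∀ s, u s ∈ U s) ∧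
    ∀ s a, P s a = fun s' => ∑ i, u s a i * w i s'}

omit [Fintype A] in
theorem sum_mixture_mul (u : ι → ℝ) (w : ι → S → ℝ) (V : S → ℝ) :
    ∑ s', (∑ i, u i * w i s') * V s' = ∑ i, u i * ∑ s', w i s' * V s' := by
  simp_rw [Finset.sum_mul, Finset.mul_sum, mul_assoc]
  exact Finset.sum_comm

theorem weakSSPs_mixtureKernels {W : ι → Set (S → ℝ)} {U : S → Set (A → ι → ℝ)}
    (hW_ne : ∀ i, (W i).Nonempty) (hW : ∀ i, IsCompact (W i))
    (hU_ne : ∀ s, (U s).Nonempty) (hU : ∀ s, IsCompact (U s))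
    (hU_nonneg : ∀ s, ∀ q ∈ U s, ∀ a i, 0 ≤ q a i) :
    WeakSSPs (mixtureKernels W U) := by
  intro π hπ V
  choose w hw hw_min using fun i =>
    (hW i).exists_isMinOn (hW_ne i) (f := fun v : S → ℝ => ∑ s', v s' * V s')
      (by fun_prop)
  set c : ι → ℝ := fun i => ∑ s', w i s' * V s'
  choose u hu hu_min using fun s =>
    (hU s).exists_isMinOn (hU_ne s)
      (f := fun q : A → ι → ℝ => ∑ a, π s a * ∑ i, q a i * c i) (by fun_prop)
  refine ⟨fun s a s' => ∑ i, u s a i * w i s', ⟨w, u, hw, hu, fun _ _ => rfl⟩, ?_⟩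
  rintro s P ⟨w', u', hw', hu', hP⟩
  obtain rfl : P = fun s a s' => ∑ i, u' s a i * w' i s' := funext₂ hP
  calc ∑ a, π s a * ∑ s', (∑ i, u s a i * w i s') * V s'
      = ∑ a, π s a * ∑ i, u s a i * c i := by simp only [sum_mixture_mul, c]
    _ ≤ ∑ a, π s a * ∑ i, u' s a i * c i := hu_min s (hu' s)
    _ ≤ ∑ a, π s a * ∑ i, u' s a i * ∑ s', w' i s' * V s' := by
      gcongr with a _ i _
      · exact (hπ s).1 a
      · exact hU_nonneg s _ (hu' s) a i
      · exact hw_min i (hw' i)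
    _ = ∑ a, π s a * ∑ s', (∑ i, u' s a i * w' i s') * V s' := by simp_rw [sum_mixture_mul]

end Mixture

theorem stmt15_general {S A : Type*} [Fintype S] [Fintype A]
    (m : ℕ)
    (W : Fin m → Set (S → ℝ))
    (hW : ∀ i, (W i).Nonempty ∧ IsCompact (W i) ∧ W i ⊆ stdSimplex ℝ S)
    (U : S → Set (A → Fin m → ℝ))
    (hU : ∀ s : S, (U s).Nonempty ∧ IsCompact (U s) ∧
      ∀ q ∈ U s, ∀ a : A, q a ∈ stdSimplex ℝ (Fin m))
    (US : Set (S → A → S → ℝ))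
    (hUS : US = {P : S → A → S → ℝ |
      ∃ (w : Fin m → S → ℝ) (uc : S → A → Fin m → ℝ),
        (∀ i, w i ∈ W i) ∧ (∀ s : S, uc s ∈ U s) ∧
        ∀ (s : S) (a : A), P s a = fun s' => ∑ i, uc s a i * w i s'}) :
    WeakSSPs US :=
  hUS ▸ weakSSPs_mixtureKernels (fun i => (hW i).1) (fun i => (hW i).2.1)
    (fun s => (hU s).1) (fun s => (hU s).2.1) (fun s q hq a => ((hU s).2.2 q hq a).1)

theorem stmt15 {S A : Type*} [Fintype S] [Fintype A] [Nonempty S] [Nonempty A]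
    (m : ℕ) (hm : 1 ≤ m)
    (W : Fin m → Set (S → ℝ))
    (hW : ∀ i, (W i).Nonempty ∧ IsCompact (W i) ∧ W i ⊆ stdSimplex ℝ S)
    (U : S → Set (A → Fin m → ℝ))
    (hU : ∀ s : S, (U s).Nonempty ∧ IsCompact (U s) ∧
      ∀ q ∈ U s, ∀ a : A, q a ∈ stdSimplex ℝ (Fin m))
    (US : Set (S → A → S → ℝ))
    (hUS : US = {P : S → A → S → ℝ |
      ∃ (w : Fin m → S → ℝ) (uc : S → A → Fin m → ℝ),
        (∀ i, w i ∈ W i) ∧ (∀ s : S, uc s ∈ U s) ∧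
        ∀ (s : S) (a : A), P s a = fun s' => ∑ i, uc s a i * w i s'}) :
    WeakSSPs US :=
  stmt15_general m W hW U hU US hUS

end RMDP
end

section
/- Let S and A be nonempty finite sets and let 𝒫 ⊆ Δ(S)^{S×A} be a convex and compact uncertainty set that is weakly sa-tractable. Then for every next-state-independent r ∈ ℝ^{S×A×S} and every γ ∈ [0,1), there exists a deterministic stationary policy π* (i.e. for each s ∈ S, π*_s is a point mass on some action) such that for every μ ∈ Δ(S), min_{P∈𝒫} ∑_s μ_s v^{π*,P}_s equals the supremum over all history-dependent policies π ∈ Π_H of inf_{P∈𝒫} ∑_s μ_s v^{π,P}_s. -/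
open scoped BigOperators

/-!
Let `v*` be the fixed point of the sa-rectangular robust optimality operator
`v ↦ max_a (r_sa + γ · min_{P ∈ 𝒫} P_sa · v)` and let `f` pick a maximising action at each state.
For the deterministic policy `π_f`, `v*` is the fixed point of `T̂^{π_f}`, so weak sa-tractability
gives `min_P μ · v^{π_f,P} = μ · v*`.

Conversely, weak sa-tractability forces `𝒫` to contain, for every `V`, a kernel minimising all rows
`P_sa · V` at once (compare both sides of the tractability identity for the rewards `r_sas' = V_s`
to first order in `γ`). For `V = v*` this kernel `P̂` satisfies the Bellman inequality
`r + γ P̂ v* ≤ v*`, which bounds the value under `P̂` of every history-dependent policy by `v*`.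
-/

open Filter Topology

section Average

variable {X : Type*} [Fintype X] {p : X → ℝ}

lemma sum_mul_const (hp : p ∈ stdSimplex ℝ X) (c : ℝ) : ∑ x, p x * c = c := by
  rw [← Finset.sum_mul, hp.2, one_mul]

lemma sum_mul_le_of_le (hp : p ∈ stdSimplex ℝ X) {f : X → ℝ} {B : ℝ} (hf : ∀ x, f x ≤ B) :
    ∑ x, p x * f x ≤ B :=
  (Finset.sum_le_sum fun x _ => mul_le_mul_of_nonneg_left (hf x) (hp.1 x)).trans_eq
    (sum_mul_const hp B)

lemma le_sum_mul_of_le (hp : p ∈ stdSimplex ℝ X) {f : X → ℝ} {B : ℝ} (hf : ∀ x, B ≤ f x) :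
    B ≤ ∑ x, p x * f x := by
  simpa [Finset.sum_neg_distrib] using sum_mul_le_of_le hp (f := -f) (B := -B) (by simpa using hf)

lemma abs_sum_mul_le (hp : p ∈ stdSimplex ℝ X) {f : X → ℝ} {B : ℝ} (hf : ∀ x, |f x| ≤ B) :
    |∑ x, p x * f x| ≤ B :=
  abs_le.2 ⟨le_sum_mul_of_le hp fun x => neg_le_of_abs_le (hf x),
    sum_mul_le_of_le hp fun x => le_of_abs_le (hf x)⟩

lemma abs_sum_mul_sub_sum_mul_le (hp : p ∈ stdSimplex ℝ X) (f g : X → ℝ) :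
    |∑ x, p x * f x - ∑ x, p x * g x| ≤ ‖f - g‖ := by
  simp_rw [← Finset.sum_sub_distrib, ← mul_sub]
  exact abs_sum_mul_le hp fun x => by simpa using norm_le_pi_norm (f - g) x

lemma eq_of_sum_mul_eq_of_le (hp : ∀ x, 0 < p x) {f g : X → ℝ} (hfg : ∀ x, f x ≤ g x)
    (h : ∑ x, p x * f x = ∑ x, p x * g x) : f = g := by
  have hzero : ∑ x, p x * (g x - f x) = 0 := by
    simp_rw [mul_sub, Finset.sum_sub_distrib, h, sub_self]
  funext x
  have hx := (Finset.sum_eq_zero_iff_of_nonneg fun y _ =>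
    mul_nonneg (hp y).le (sub_nonneg.2 (hfg y))).1 hzero x (Finset.mem_univ x)
  linarith [(mul_eq_zero.1 hx).resolve_left (hp x).ne']

end Average

lemma eq_of_forall_abs_sub_le_mul {x y C : ℝ}
    (h : ∀ γ : ℝ, 0 < γ → γ ≤ 1 / 2 → |x - y| ≤ C * γ) : x = y := by
  have hlim : Tendsto (fun γ => C * γ) (𝓝[>] 0) (𝓝 0) :=
    ((continuous_const_mul C).tendsto' 0 0 (mul_zero C)).mono_left nhdsWithin_le_nhds
  have hle : |x - y| ≤ 0 := ge_of_tendsto hlim <| by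
    filter_upwards [Ioo_mem_nhdsGT (by norm_num : (0 : ℝ) < 1 / 2)] with γ hγ
    exact h γ hγ.1 hγ.2.le
  exact sub_eq_zero.1 (abs_nonpos_iff.1 hle)

lemma abs_sub_le_of_abs_sub_add_mul_le {a b x y γ ε : ℝ} (hγ : 0 < γ)
    (hx : |a - (b + γ * x)| ≤ ε) (hy : |a - (b + γ * y)| ≤ ε) : |x - y| ≤ 2 * ε / γ := by
  rw [le_div_iff₀ hγ]
  calc |x - y| * γ = |(x - y) * γ| := by rw [abs_mul, abs_of_pos hγ]
    _ = |(a - (b + γ * y)) - (a - (b + γ * x))| := by ring_nf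
    _ ≤ 2 * ε := (abs_sub _ _).trans (by linarith)

lemma abs_sup'_sub_sup'_le {ι : Type*} {s : Finset ι} (hs : s.Nonempty) {f g : ι → ℝ} {δ : ℝ}
    (h : ∀ i ∈ s, |f i - g i| ≤ δ) : |s.sup' hs f - s.sup' hs g| ≤ δ := by
  rw [abs_sub_le_iff, sub_le_iff_le_add, sub_le_iff_le_add]
  exact ⟨Finset.sup'_le _ _ fun i hi => by linarith [(abs_le.1 (h i hi)).2, Finset.le_sup' g hi],
    Finset.sup'_le _ _ fun i hi => by linarith [(abs_le.1 (h i hi)).1, Finset.le_sup' f hi]⟩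

section Contraction

variable {E : Type*} [NormedAddCommGroup E] [NormedSpace ℝ E] {M : E → E}

lemma contractingWith_const_add_smul (hM : LipschitzWith 1 M) (b : E) {γ : ℝ} (hγ0 : 0 ≤ γ)
    (hγ1 : γ < 1) : ContractingWith γ.toNNReal (fun v => b + γ • M v) := by
  refine ⟨Real.toNNReal_lt_one.2 hγ1, LipschitzWith.of_dist_le_mul fun v w => ?_⟩
  rw [Real.coe_toNNReal _ hγ0, dist_add_left, dist_smul₀, Real.norm_of_nonneg hγ0]
  exact mul_le_mul_of_nonneg_left (by simpa using hM.dist_le_mul v w) hγ0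

lemma norm_sub_const_add_smul_le (hM : LipschitzWith 1 M) (hM0 : M 0 = 0) {γ : ℝ}
    (hγ0 : 0 ≤ γ) (hγ : γ ≤ 1 / 2) {u V : E} (hu : u = V + γ • M u) :
    ‖u - (V + γ • M V)‖ ≤ 2 * γ ^ 2 * ‖V‖ := by
  have hM' : ∀ w w', ‖M w - M w'‖ ≤ ‖w - w'‖ := fun w w' => by
    simpa [dist_eq_norm] using hM.dist_le_mul w w'
  have hMu : ‖M u‖ ≤ ‖u‖ := by simpa [hM0] using hM' u 0
  have huV : ‖u - V‖ ≤ γ * ‖u‖ := by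
    rw [sub_eq_iff_eq_add'.2 hu, norm_smul, Real.norm_of_nonneg hγ0]
    exact mul_le_mul_of_nonneg_left hMu hγ0
  have hu2 : ‖u‖ ≤ 2 * ‖V‖ := by
    have := norm_le_norm_add_norm_sub' u V
    nlinarith [norm_nonneg u]
  calc ‖u - (V + γ • M V)‖ = γ * ‖M u - M V‖ := by
        conv_lhs => rw [hu]
        rw [add_sub_add_left_eq_sub, ← smul_sub, norm_smul, Real.norm_of_nonneg hγ0]
    _ ≤ γ * (γ * ‖u‖) := mul_le_mul_of_nonneg_left ((hM' u V).trans huV) hγ0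
    _ ≤ 2 * γ ^ 2 * ‖V‖ := by nlinarith [mul_nonneg hγ0 hγ0]

end Contraction

lemma abs_sum_mul_sub_le_of_eq_add_smul {X : Type*} [Fintype X] {μ : X → ℝ}
    (hμ : μ ∈ stdSimplex ℝ X) {M : (X → ℝ) → X → ℝ} (hM : LipschitzWith 1 M) (hM0 : M 0 = 0)
    {γ : ℝ} (hγ0 : 0 ≤ γ) (hγ : γ ≤ 1 / 2) {u V : X → ℝ} (hu : u = V + γ • M u) :
    |∑ x, μ x * u x - (∑ x, μ x * V x + γ * ∑ x, μ x * M V x)| ≤ 2 * γ ^ 2 * ‖V‖ := by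
  have hlin : ∑ x, μ x * V x + γ * ∑ x, μ x * M V x = ∑ x, μ x * (V + γ • M V) x := by
    simp only [Pi.add_apply, Pi.smul_apply, smul_eq_mul, mul_add, Finset.sum_add_distrib,
      Finset.mul_sum]
    exact congrArg _ (Finset.sum_congr rfl fun x _ => by ring)
  rw [hlin]
  exact (abs_sum_mul_sub_sum_mul_le hμ _ _).trans
    (norm_sub_const_add_smul_le hM hM0 hγ0 hγ hu)

namespace RMDP

variable {S A : Type*} [Fintype S] [Fintype A]

section MinOver

variable {K : Type*} {U : Set K} {f g : K → ℝ}

lemma minOver_le_s17 (hf : BddBelow (f '' U)) {x : K} (hx : x ∈ U) : minOver U f ≤ f x :=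
  csInf_le hf ⟨x, hx, rfl⟩

lemma le_minOver_s17 (hU : U.Nonempty) {c : ℝ} (h : ∀ x ∈ U, c ≤ f x) : c ≤ minOver U f :=
  le_csInf (hU.image f) (by rintro _ ⟨x, hx, rfl⟩; exact h x hx)

lemma minOver_congr (h : ∀ x ∈ U, f x = g x) : minOver U f = minOver U g := by
  rw [minOver, minOver, Set.image_congr h]

lemma exists_minOver_eq [TopologicalSpace K] (hU : IsCompact U) (hne : U.Nonempty)
    (hf : ContinuousOn f U) : ∃ x ∈ U, minOver U f = f x ∧ ∀ y ∈ U, f x ≤ f y := by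
  obtain ⟨x, hx, hmin⟩ := hU.exists_isMinOn hne hf
  exact ⟨x, hx, le_antisymm (minOver_le_s17 (hU.bddBelow_image hf) hx) (le_minOver_s17 hne hmin), hmin⟩

lemma minOver_const_add_mul [TopologicalSpace K] (hU : IsCompact U) (hne : U.Nonempty)
    (hf : ContinuousOn f U) (c : ℝ) {γ : ℝ} (hγ : 0 ≤ γ) :
    minOver U (fun x => c + γ * f x) = c + γ * minOver U f := by
  obtain ⟨x, hx, hfx, hmin⟩ := exists_minOver_eq hU hne hf
  have hle : ∀ y ∈ U, c + γ * f x ≤ c + γ * f y := fun y hy =>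
    add_le_add_right (mul_le_mul_of_nonneg_left (hmin y hy) hγ) c
  rw [hfx]
  exact le_antisymm (minOver_le_s17 ⟨_, by rintro _ ⟨y, hy, rfl⟩; exact hle y hy⟩ hx)
    (le_minOver_s17 hne hle)

lemma minOver_le_minOver_add_s17 (hne : U.Nonempty) (hf : BddBelow (f '' U)) {δ : ℝ}
    (h : ∀ x ∈ U, f x ≤ g x + δ) : minOver U f ≤ minOver U g + δ := by
  have : minOver U f - δ ≤ minOver U g :=
    le_minOver_s17 hne fun x hx => by linarith [minOver_le_s17 hf hx, h x hx]
  linarith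

lemma abs_minOver_sub_le (hne : U.Nonempty) (hg : BddBelow (g '' U)) {δ : ℝ}
    (h : ∀ x ∈ U, |f x - g x| ≤ δ) : |minOver U f - minOver U g| ≤ δ := by
  obtain ⟨c, hc⟩ := hg
  have hf : BddBelow (f '' U) := ⟨c - δ, by
    rintro _ ⟨x, hx, rfl⟩
    linarith [hc ⟨x, hx, rfl⟩, (abs_le.1 (h x hx)).1]⟩
  rw [abs_sub_le_iff]
  constructor
  · linarith [minOver_le_minOver_add_s17 (g := g) hne hf fun x hx => by
      linarith [(abs_le.1 (h x hx)).2]]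
  · linarith [minOver_le_minOver_add_s17 (g := f) hne ⟨c, hc⟩ fun x hx => by
      linarith [(abs_le.1 (h x hx)).1]]

end MinOver

section Operators

variable {US : Set (S → A → S → ℝ)} {π : S → A → ℝ} {P : S → A → S → ℝ}
  {r : S → A → S → ℝ} {γ : ℝ}

def rowAvg (P : S → A → S → ℝ) (s : S) (a : A) (v : S → ℝ) : ℝ := ∑ s', P s a s' * v s'

noncomputable def rowMin (US : Set (S → A → S → ℝ)) (s : S) (a : A) (v : S → ℝ) : ℝ :=
  minOver US fun P => rowAvg P s a v

def avgOp (π : S → A → ℝ) (L : S → A → (S → ℝ) → ℝ) (v : S → ℝ) : S → ℝ :=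
  fun s => ∑ a, π s a * L s a v

omit [Fintype A] in
lemma continuous_rowAvg (s : S) (a : A) (v : S → ℝ) :
    Continuous fun P : S → A → S → ℝ => rowAvg P s a v := by
  unfold rowAvg
  fun_prop

omit [Fintype A] in
lemma rowMin_le (hcpt : IsCompact US) (hP : P ∈ US) (s : S) (a : A) (v : S → ℝ) :
    rowMin US s a v ≤ rowAvg P s a v :=
  minOver_le_s17 (hcpt.bddBelow_image (continuous_rowAvg s a v).continuousOn) hP

omit [Fintype A] in
lemma abs_rowAvg_sub_le (hP : IsKernel P) (s : S) (a : A) (v w : S → ℝ) :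
    |rowAvg P s a v - rowAvg P s a w| ≤ ‖v - w‖ :=
  abs_sum_mul_sub_sum_mul_le (hP s a) v w

omit [Fintype A] in
lemma lipschitzWith_rowAvg (hP : IsKernel P) (s : S) (a : A) : LipschitzWith 1 (rowAvg P s a) :=
  LipschitzWith.of_dist_le_mul fun v w => by
    simpa [Real.dist_eq, dist_eq_norm] using abs_rowAvg_sub_le hP s a v w

omit [Fintype A] in
lemma lipschitzWith_rowMin (hne : US.Nonempty) (hker : ∀ P ∈ US, IsKernel P)
    (hcpt : IsCompact US) (s : S) (a : A) : LipschitzWith 1 (rowMin US s a) :=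
  LipschitzWith.of_dist_le_mul fun v w => by
    rw [Real.dist_eq, NNReal.coe_one, one_mul, dist_eq_norm]
    exact abs_minOver_sub_le hne (hcpt.bddBelow_image (continuous_rowAvg s a w).continuousOn)
      fun P hP => abs_rowAvg_sub_le (hker P hP) s a v w

omit [Fintype A] in
lemma rowAvg_zero (P : S → A → S → ℝ) (s : S) (a : A) : rowAvg P s a 0 = 0 := by
  simp [rowAvg]

omit [Fintype A] in
lemma rowMin_zero (hne : US.Nonempty) (s : S) (a : A) : rowMin US s a 0 = 0 := by
  simp only [rowMin, minOver, rowAvg_zero, hne.image_const, csInf_singleton]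

lemma lipschitzWith_avgOp (hπ : IsPolicy π) {L : S → A → (S → ℝ) → ℝ}
    (hL : ∀ s a, LipschitzWith 1 (L s a)) : LipschitzWith 1 (avgOp π L) :=
  LipschitzWith.of_dist_le_mul fun v w => by
    refine (dist_pi_le_iff (by positivity)).2 fun s => ?_
    rw [Real.dist_eq, NNReal.coe_one, one_mul, avgOp, avgOp, ← Finset.sum_sub_distrib]
    simp_rw [← mul_sub]
    exact abs_sum_mul_le (hπ s) fun a => by
      simpa [Real.dist_eq] using (hL s a).dist_le_mul v w

omit [Fintype S] in
lemma avgOp_zero {L : S → A → (S → ℝ) → ℝ} (hL : ∀ s a, L s a 0 = 0) : avgOp π L 0 = 0 := by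
  funext s
  simp [avgOp, hL]

lemma TpiP_eq_add_smul (π : S → A → ℝ) (r : S → A → S → ℝ) (γ : ℝ) (P : S → A → S → ℝ) :
    TpiP π r γ P = fun v => (fun s => ∑ a, π s a * rowAvg P s a (r s a)) +
      γ • avgOp π (rowAvg P) v := by
  funext v s
  simp only [TpiP, avgOp, rowAvg, Pi.add_apply, Pi.smul_apply, smul_eq_mul, Finset.mul_sum,
    mul_add, Finset.sum_add_distrib]
  congr 1
  exact Finset.sum_congr rfl fun a _ => Finset.sum_congr rfl fun s' _ => by ring

lemma contractingWith_TpiP (hπ : IsPolicy π) (hP : IsKernel P) (r : S → A → S → ℝ)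
    (hγ0 : 0 ≤ γ) (hγ1 : γ < 1) : ContractingWith γ.toNNReal (TpiP π r γ P) := by
  rw [TpiP_eq_add_smul]
  exact contractingWith_const_add_smul
    (lipschitzWith_avgOp hπ (lipschitzWith_rowAvg hP)) _ hγ0 hγ1

omit [Fintype A] in
lemma sum_mul_add_mul_of_nextStateIndep (hP : IsKernel P) (hr : NextStateIndep r) (γ : ℝ)
    (v : S → ℝ) (s : S) (a : A) :
    ∑ s', P s a s' * (r s a s' + γ * v s') = r s a s + γ * rowAvg P s a v := by
  simp_rw [hr s a _ s, mul_add, Finset.sum_add_distrib, ← Finset.sum_mul, (hP s a).2, one_mul,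
    rowAvg, Finset.mul_sum]
  exact congrArg _ (Finset.sum_congr rfl fun s' _ => by ring)

lemma TpiHat_eq_add_smul (hne : US.Nonempty) (hker : ∀ P ∈ US, IsKernel P)
    (hcpt : IsCompact US) (π : S → A → ℝ) (hr : NextStateIndep r) (hγ0 : 0 ≤ γ) :
    TpiHat US π r γ = fun v => (fun s => ∑ a, π s a * r s a s) +
      γ • avgOp π (rowMin US) v := by
  funext v s
  simp only [TpiHat, avgOp, Pi.add_apply, Pi.smul_apply, smul_eq_mul, Finset.mul_sum,
    ← Finset.sum_add_distrib]
  refine Finset.sum_congr rfl fun a _ => ?_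
  rw [minOver_congr fun P hP => sum_mul_add_mul_of_nextStateIndep (hker P hP) hr γ v s a,
    minOver_const_add_mul hcpt hne (continuous_rowAvg s a v).continuousOn _ hγ0, rowMin]
  ring

lemma contractingWith_TpiHat (hne : US.Nonempty) (hker : ∀ P ∈ US, IsKernel P)
    (hcpt : IsCompact US) (hπ : IsPolicy π) (hr : NextStateIndep r) (hγ0 : 0 ≤ γ)
    (hγ1 : γ < 1) : ContractingWith γ.toNNReal (TpiHat US π r γ) := by
  rw [TpiHat_eq_add_smul hne hker hcpt π hr hγ0]
  exact contractingWith_const_add_smul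
    (lipschitzWith_avgOp hπ (lipschitzWith_rowMin hne hker hcpt)) _ hγ0 hγ1

lemma TpiHat_ite_eq [DecidableEq A] (hne : US.Nonempty) (hker : ∀ P ∈ US, IsKernel P)
    (hcpt : IsCompact US) (hr : NextStateIndep r) (hγ0 : 0 ≤ γ) {v : S → ℝ} {f : S → A}
    (hf : ∀ s, r s (f s) s + γ * rowMin US s (f s) v = v s) :
    TpiHat US (fun s a => if a = f s then 1 else 0) r γ v = v := by
  rw [TpiHat_eq_add_smul hne hker hcpt _ hr hγ0]
  funext s
  simpa [avgOp] using hf s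

end Operators

section Optimality

variable [Nonempty A] {US : Set (S → A → S → ℝ)} {r : S → A → S → ℝ} {γ : ℝ}

noncomputable def optOp (US : Set (S → A → S → ℝ)) (r : S → A → S → ℝ) (γ : ℝ) (v : S → ℝ) :
    S → ℝ :=
  fun s => Finset.univ.sup' Finset.univ_nonempty fun a => r s a s + γ * rowMin US s a v

lemma contractingWith_optOp (hne : US.Nonempty) (hker : ∀ P ∈ US, IsKernel P)
    (hcpt : IsCompact US) (r : S → A → S → ℝ) (hγ0 : 0 ≤ γ) (hγ1 : γ < 1) :
    ContractingWith γ.toNNReal (optOp US r γ) := by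
  refine ⟨Real.toNNReal_lt_one.2 hγ1, LipschitzWith.of_dist_le_mul fun v w => ?_⟩
  rw [Real.coe_toNNReal _ hγ0]
  refine (dist_pi_le_iff (by positivity)).2 fun s => ?_
  rw [Real.dist_eq]
  refine abs_sup'_sub_sup'_le _ fun a _ => ?_
  rw [add_sub_add_left_eq_sub, ← mul_sub, abs_mul, abs_of_nonneg hγ0]
  exact mul_le_mul_of_nonneg_left (by
    simpa [Real.dist_eq] using (lipschitzWith_rowMin hne hker hcpt s a).dist_le_mul v w) hγ0

lemma le_optOp (US : Set (S → A → S → ℝ)) (r : S → A → S → ℝ) (γ : ℝ) (v : S → ℝ) (s : S)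
    (a : A) : r s a s + γ * rowMin US s a v ≤ optOp US r γ v s :=
  Finset.le_sup' (fun a => r s a s + γ * rowMin US s a v) (Finset.mem_univ a)

lemma exists_optOp_eq (US : Set (S → A → S → ℝ)) (r : S → A → S → ℝ) (γ : ℝ) (v : S → ℝ)
    (s : S) : ∃ a, r s a s + γ * rowMin US s a v = optOp US r γ v s := by
  obtain ⟨a, -, ha⟩ := Finset.exists_mem_eq_sup' Finset.univ_nonempty
    (fun a => r s a s + γ * rowMin US s a v)
  exact ⟨a, ha.symm⟩

lemma sum_mul_add_mul_le_of_optOp_eq (hne : US.Nonempty) (hr : NextStateIndep r)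
    (hγ0 : 0 ≤ γ) {v : S → ℝ} (hv : optOp US r γ v = v) {P : S → A → S → ℝ} (hP : IsKernel P)
    (hPmin : ∀ s a, ∀ Q ∈ US, rowAvg P s a v ≤ rowAvg Q s a v) (s : S) (a : A) :
    ∑ s', P s a s' * (r s a s' + γ * v s') ≤ v s := by
  rw [sum_mul_add_mul_of_nextStateIndep hP hr]
  calc r s a s + γ * rowAvg P s a v ≤ r s a s + γ * rowMin US s a v := by
        gcongr
        exact le_minOver_s17 hne (hPmin s a)
    _ ≤ v s := (le_optOp US r γ v s a).trans_eq (congrFun hv s)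

end Optimality

section HistoryDependent

variable {π : List (S × A) → S → A → ℝ} {P : S → A → S → ℝ} {r : S → A → S → ℝ} {γ : ℝ}

lemma abs_apply_le_norm (r : S → A → S → ℝ) (s : S) (a : A) (s' : S) : |r s a s'| ≤ ‖r‖ := by
  simpa using ((norm_le_pi_norm (r s a) s').trans (norm_le_pi_norm (r s) a)).trans
    (norm_le_pi_norm r s)

lemma abs_expRHH_le (hπ : IsHPolicy π) (hP : IsKernel P) (r : S → A → S → ℝ) (t : ℕ) :
    ∀ h s, |expRHH π (fun _ => P) r t h s| ≤ ‖r‖ := by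
  induction t with
  | zero => exact fun h s => abs_sum_mul_le (hπ h s) fun a =>
      abs_sum_mul_le (hP s a) fun s' => abs_apply_le_norm r s a s'
  | succ t ih => exact fun h s => abs_sum_mul_le (hπ h s) fun a =>
      abs_sum_mul_le (hP s a) fun s' => ih _ s'

lemma norm_pow_mul_expRHH_le (hπ : IsHPolicy π) (hP : IsKernel P) (r : S → A → S → ℝ)
    (hγ0 : 0 ≤ γ) (t : ℕ) (h : List (S × A)) (s : S) :
    ‖γ ^ t * expRHH π (fun _ => P) r t h s‖ ≤ ‖r‖ * γ ^ t := by
  rw [Real.norm_eq_abs, abs_mul, abs_pow, abs_of_nonneg hγ0, mul_comm]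
  exact mul_le_mul_of_nonneg_right (abs_expRHH_le hπ hP r t h s) (pow_nonneg hγ0 t)

lemma abs_vHH_le (hπ : IsHPolicy π) (hP : IsKernel P) (r : S → A → S → ℝ) (hγ0 : 0 ≤ γ)
    (hγ1 : γ < 1) (s : S) : |vHH π (fun _ => P) r γ s| ≤ ‖r‖ * (1 - γ)⁻¹ :=
  tsum_of_norm_bounded ((hasSum_geometric_of_lt_one hγ0 hγ1).mul_left ‖r‖)
    fun t => norm_pow_mul_expRHH_le hπ hP r hγ0 t [] s

noncomputable def partialValue (π : List (S × A) → S → A → ℝ) (P : S → A → S → ℝ)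
    (r : S → A → S → ℝ) (γ : ℝ) (t : ℕ) (h : List (S × A)) (s : S) : ℝ :=
  ∑ k ∈ Finset.range t, γ ^ k * expRHH π (fun _ => P) r k h s

lemma tendsto_partialValue (hπ : IsHPolicy π) (hP : IsKernel P) (r : S → A → S → ℝ)
    (hγ0 : 0 ≤ γ) (hγ1 : γ < 1) (s : S) :
    Tendsto (fun t => partialValue π P r γ t [] s) atTop (𝓝 (vHH π (fun _ => P) r γ s)) :=
  (Summable.of_norm_bounded ((summable_geometric_of_lt_one hγ0 hγ1).mul_left ‖r‖)
    fun t => norm_pow_mul_expRHH_le hπ hP r hγ0 t [] s).hasSum.tendsto_sum_nat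

lemma partialValue_succ (π : List (S × A) → S → A → ℝ) (P : S → A → S → ℝ)
    (r : S → A → S → ℝ) (γ : ℝ) (t : ℕ) (h : List (S × A)) (s : S) :
    partialValue π P r γ (t + 1) h s =
      ∑ a, π h s a *
        ∑ s', P s a s' * (r s a s' + γ * partialValue π P r γ t (h ++ [(s, a)]) s') := by
  simp only [partialValue, Finset.sum_range_succ', pow_zero, one_mul, expRHH, Finset.mul_sum,
    mul_add, Finset.sum_add_distrib]
  rw [add_comm]
  congr 1
  rw [Finset.sum_comm]
  refine Finset.sum_congr rfl fun a _ => ?_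
  rw [Finset.sum_comm]
  refine Finset.sum_congr rfl fun s' _ => Finset.sum_congr rfl fun k _ => by ring

lemma partialValue_le_of_bellman (hπ : IsHPolicy π) (hP : IsKernel P) (hγ0 : 0 ≤ γ)
    {w : S → ℝ} (hw : ∀ s a, ∑ s', P s a s' * (r s a s' + γ * w s') ≤ w s) (t : ℕ) :
    ∀ h s, partialValue π P r γ t h s ≤ w s + γ ^ t * ‖w‖ := by
  induction t with
  | zero =>
    intro h s
    simp only [partialValue, Finset.range_zero, Finset.sum_empty, pow_zero, one_mul]
    linarith [neg_le_of_abs_le (show |w s| ≤ ‖w‖ by simpa using norm_le_pi_norm w s)]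
  | succ t ih =>
    intro h s
    rw [partialValue_succ]
    refine sum_mul_le_of_le (hπ h s) fun a => ?_
    calc ∑ s', P s a s' * (r s a s' + γ * partialValue π P r γ t (h ++ [(s, a)]) s')
        ≤ ∑ s', P s a s' * ((r s a s' + γ * w s') + γ ^ (t + 1) * ‖w‖) := by
          refine Finset.sum_le_sum fun s' _ => mul_le_mul_of_nonneg_left ?_ ((hP s a).1 s')
          have := mul_le_mul_of_nonneg_left (ih (h ++ [(s, a)]) s') hγ0
          rw [pow_succ]
          linarith
      _ = ∑ s', P s a s' * (r s a s' + γ * w s') + γ ^ (t + 1) * ‖w‖ := by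
          simp_rw [mul_add _ (r _ _ _ + _), Finset.sum_add_distrib, sum_mul_const (hP s a)]
      _ ≤ w s + γ ^ (t + 1) * ‖w‖ := by linarith [hw s a]

lemma vHH_le_of_bellman (hπ : IsHPolicy π) (hP : IsKernel P) (hγ0 : 0 ≤ γ) (hγ1 : γ < 1)
    {w : S → ℝ} (hw : ∀ s a, ∑ s', P s a s' * (r s a s' + γ * w s') ≤ w s) (s : S) :
    vHH π (fun _ => P) r γ s ≤ w s := by
  have hlim : Tendsto (fun t : ℕ => w s + γ ^ t * ‖w‖) atTop (𝓝 (w s)) := by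
    simpa using ((tendsto_pow_atTop_nhds_zero_of_lt_one hγ0 hγ1).mul_const ‖w‖).const_add (w s)
  exact le_of_tendsto_of_tendsto' (tendsto_partialValue hπ hP r hγ0 hγ1 s) hlim
    fun t => partialValue_le_of_bellman hπ hP hγ0 hw t [] s

lemma expRHH_const_eq (π₀ : S → A → ℝ) (P : S → A → S → ℝ) (r : S → A → S → ℝ) (t : ℕ) :
    ∀ h h' s, expRHH (fun _ => π₀) (fun _ => P) r t h s =
      expRHH (fun _ => π₀) (fun _ => P) r t h' s := by
  induction t with
  | zero => exact fun _ _ _ => rfl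
  | succ t ih =>
    intro h h' s
    simp only [expRHH]
    exact Finset.sum_congr rfl fun a _ => congrArg _ <|
      Finset.sum_congr rfl fun s' _ => congrArg _ (ih _ _ s')

lemma partialValue_const_succ (π₀ : S → A → ℝ) (P : S → A → S → ℝ) (r : S → A → S → ℝ)
    (γ : ℝ) (t : ℕ) :
    partialValue (fun _ => π₀) P r γ (t + 1) [] =
      TpiP π₀ r γ P (partialValue (fun _ => π₀) P r γ t []) := by
  funext s
  have hhist : ∀ h, partialValue (fun _ => π₀) P r γ t h = partialValue (fun _ => π₀) P r γ t [] :=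
    fun h => funext fun s' => Finset.sum_congr rfl fun k _ => by rw [expRHH_const_eq π₀ P r k h []]
  simp only [partialValue_succ, hhist, TpiP]

lemma partialValue_const_eq_iterate (π₀ : S → A → ℝ) (P : S → A → S → ℝ) (r : S → A → S → ℝ)
    (γ : ℝ) (t : ℕ) : partialValue (fun _ => π₀) P r γ t [] = (TpiP π₀ r γ P)^[t] 0 := by
  induction t with
  | zero => funext s; simp [partialValue]
  | succ t ih => rw [Function.iterate_succ_apply', ← ih, partialValue_const_succ]

lemma vHH_const_eq_of_isFixedPt {π₀ : S → A → ℝ} (hπ₀ : IsPolicy π₀) (hP : IsKernel P)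
    (hγ0 : 0 ≤ γ) (hγ1 : γ < 1) {u : S → ℝ} (hu : TpiP π₀ r γ P u = u) :
    vHH (fun _ => π₀) (fun _ => P) r γ = u := by
  have hF := contractingWith_TpiP hπ₀ hP r hγ0 hγ1
  have hiter := hF.tendsto_iterate_fixedPoint 0
  simp_rw [← partialValue_const_eq_iterate] at hiter
  rw [hF.fixedPoint_unique hu]
  exact tendsto_nhds_unique (tendsto_pi_nhds.2 fun s =>
    tendsto_partialValue (fun _ s => hπ₀ s) hP r hγ0 hγ1 s) hiter

lemma minOver_sum_mul_vHH_le {US : Set (S → A → S → ℝ)} {μ : S → ℝ} (hμ : μ ∈ stdSimplex ℝ S)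
    {π : List (S × A) → S → A → ℝ} (hπ : IsHPolicy π) (hker : ∀ P ∈ US, IsKernel P)
    (hγ0 : 0 ≤ γ) (hγ1 : γ < 1) {w : S → ℝ} {P : S → A → S → ℝ} (hP : P ∈ US)
    (hw : ∀ s a, ∑ s', P s a s' * (r s a s' + γ * w s') ≤ w s) :
    minOver US (fun Q => ∑ s, μ s * vHH π (fun _ => Q) r γ s) ≤ ∑ s, μ s * w s := by
  have hbdd : BddBelow ((fun Q => ∑ s, μ s * vHH π (fun _ => Q) r γ s) '' US) :=
    ⟨-(‖r‖ * (1 - γ)⁻¹), by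
      rintro _ ⟨Q, hQ, rfl⟩
      exact le_sum_mul_of_le hμ fun s =>
        neg_le_of_abs_le (abs_vHH_le hπ (hker Q hQ) r hγ0 hγ1 s)⟩
  exact (minOver_le_s17 hbdd hP).trans <| Finset.sum_le_sum fun s _ =>
    mul_le_mul_of_nonneg_left (vHH_le_of_bellman hπ (hker P hP) hγ0 hγ1 hw s) (hμ.1 s)

end HistoryDependent

section Tractability

variable {US : Set (S → A → S → ℝ)}

lemma continuous_avgOp_rowAvg (π : S → A → ℝ) (V : S → ℝ) (s : S) :
    Continuous fun P : S → A → S → ℝ => avgOp π (rowAvg P) V s := by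
  simp only [avgOp, rowAvg]
  fun_prop

lemma TpiP_const_reward {π : S → A → ℝ} (hπ : IsPolicy π) {P : S → A → S → ℝ} (hP : IsKernel P)
    (V : S → ℝ) (γ : ℝ) :
    TpiP π (fun s _ _ => V s) γ P = fun u => V + γ • avgOp π (rowAvg P) u := by
  have hrow : ∀ s a, rowAvg P s a (fun _ => V s) = V s := fun s a => sum_mul_const (hP s a) _
  simp only [TpiP_eq_add_smul, hrow, fun s => sum_mul_const (hπ s)]

lemma TpiHat_const_reward (hne : US.Nonempty) (hker : ∀ P ∈ US, IsKernel P)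
    (hcpt : IsCompact US) {π : S → A → ℝ} (hπ : IsPolicy π) (V : S → ℝ) {γ : ℝ} (hγ0 : 0 ≤ γ) :
    TpiHat US π (fun s _ _ => V s) γ = fun u => V + γ • avgOp π (rowMin US) u := by
  rw [TpiHat_eq_add_smul hne hker hcpt π (fun _ _ _ _ => rfl) hγ0]
  simp only [fun s => sum_mul_const (hπ s)]

/-- Apply tractability to the rewards `r s a s' = V s` and let `γ → 0`: to first order in `γ`,
the value functions are `V + γ • avgOp π (rowAvg P) V` and `V + γ • avgOp π (rowMin US) V`. -/
theorem WeakSATractable.minOver_eq (hwsa : WeakSATractable US) (hne : US.Nonempty)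
    (hker : ∀ P ∈ US, IsKernel P) (hcpt : IsCompact US) {μ : S → ℝ} (hμ : μ ∈ stdSimplex ℝ S)
    {π : S → A → ℝ} (hπ : IsPolicy π) (V : S → ℝ) :
    minOver US (fun P => ∑ s, μ s * avgOp π (rowAvg P) V s) =
      ∑ s, μ s * avgOp π (rowMin US) V s := by
  set Φ := fun P => ∑ s, μ s * avgOp π (rowAvg P) V s
  have hΦc : Continuous Φ := continuous_finsetSum _ fun s _ =>
    continuous_const.mul (continuous_avgOp_rowAvg π V s)
  refine eq_of_forall_abs_sub_le_mul (C := 4 * ‖V‖) fun γ hγ hγ2 => ?_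
  have hγ1 : γ < 1 := by linarith
  set r : S → A → S → ℝ := fun s _ _ => V s
  have hr : NextStateIndep r := fun _ _ _ _ => rfl
  choose vP hvP using fun P => show ∃ u, P ∈ US → TpiP π r γ P u = u by
    by_cases hP : P ∈ US
    · exact ⟨_, fun _ => (contractingWith_TpiP hπ (hker P hP) r hγ.le hγ1).fixedPoint_isFixedPt⟩
    · exact ⟨0, fun h => absurd h hP⟩
  have hcontr := contractingWith_TpiHat hne hker hcpt hπ hr hγ.le hγ1
  set û := ContractingWith.fixedPoint _ hcontr
  have hû : TpiHat US π r γ û = û := hcontr.fixedPoint_isFixedPt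
  have hvP_approx : ∀ P ∈ US, |∑ s, μ s * vP P s - (∑ s, μ s * V s + γ * Φ P)| ≤
      2 * γ ^ 2 * ‖V‖ := fun P hP =>
    abs_sum_mul_sub_le_of_eq_add_smul hμ
      (lipschitzWith_avgOp hπ (lipschitzWith_rowAvg (hker P hP))) (avgOp_zero (rowAvg_zero P))
      hγ.le hγ2 (by have h := hvP P hP; rw [TpiP_const_reward hπ (hker P hP)] at h; exact h.symm)
  have hû_approx : |∑ s, μ s * û s - (∑ s, μ s * V s + γ * ∑ s, μ s * avgOp π (rowMin US) V s)|
      ≤ 2 * γ ^ 2 * ‖V‖ :=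
    abs_sum_mul_sub_le_of_eq_add_smul hμ
      (lipschitzWith_avgOp hπ (lipschitzWith_rowMin hne hker hcpt))
      (avgOp_zero (rowMin_zero hne)) hγ.le hγ2
      (by rw [TpiHat_const_reward hne hker hcpt hπ V hγ.le] at hû; exact hû.symm)
  have hmin_approx : |∑ s, μ s * û s - (∑ s, μ s * V s + γ * minOver US Φ)| ≤
      2 * γ ^ 2 * ‖V‖ := by
    rw [← hwsa π hπ r hr γ hγ.le hγ1 vP hvP û hû μ hμ,
      ← minOver_const_add_mul hcpt hne hΦc.continuousOn _ hγ.le]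
    exact abs_minOver_sub_le hne
      (hcpt.bddBelow_image (continuous_const.add (continuous_const.mul hΦc)).continuousOn)
      hvP_approx
  exact (abs_sub_le_of_abs_sub_add_mul_le hγ hmin_approx hû_approx).trans_eq
    (by field_simp; ring)

theorem WeakSATractable.weakSSPsa [Nonempty S] [Nonempty A] (hwsa : WeakSATractable US)
    (hne : US.Nonempty) (hker : ∀ P ∈ US, IsKernel P) (hcpt : IsCompact US) :
    WeakSSPsa US := by
  intro V
  set μ := (stdSimplex.barycenter : stdSimplex ℝ S).1
  set π : S → A → ℝ := fun _ => (stdSimplex.barycenter : stdSimplex ℝ A).1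
  have hπ : IsPolicy π := fun _ => stdSimplex.barycenter.2
  obtain ⟨Pstar, hPstar, hmin, -⟩ := exists_minOver_eq hcpt hne
    (f := fun P => ∑ s, μ s * avgOp π (rowAvg P) V s) (continuous_finsetSum _ fun s _ =>
      continuous_const.mul (continuous_avgOp_rowAvg π V s)).continuousOn
  have heq := (hwsa.minOver_eq hne hker hcpt stdSimplex.barycenter.2 hπ V).symm.trans hmin
  have hrow := fun s a => rowMin_le hcpt hPstar s a V
  have hstate := eq_of_sum_mul_eq_of_le (fun s => by simp [Fintype.card_pos]) (fun s =>
    Finset.sum_le_sum fun a _ => mul_le_mul_of_nonneg_left (hrow s a) ((hπ s).1 a)) heq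
  refine ⟨Pstar, hPstar, fun s a P hP => ?_⟩
  have haction := eq_of_sum_mul_eq_of_le (fun a => by simp [π, Fintype.card_pos]) (hrow s)
    (congrFun hstate s)
  exact (congrFun haction a).symm.trans_le (rowMin_le hcpt hP s a V)

end Tractability

theorem stmt17_general {S A : Type*} [Fintype S] [Fintype A] [Nonempty S] [Nonempty A] [DecidableEq A]
    (US : Set (S → A → S → ℝ)) (hne : US.Nonempty) (hker : ∀ P ∈ US, IsKernel P)
    (hcpt : IsCompact US) (hwsa : WeakSATractable US)
    (r : S → A → S → ℝ) (hr : NextStateIndep r) (γ : ℝ) (hγ0 : 0 ≤ γ) (hγ1 : γ < 1)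
    (v : (S → A → ℝ) → (S → A → S → ℝ) → S → ℝ)
    (hv : ∀ π : S → A → ℝ, IsPolicy π → ∀ P ∈ US, TpiP π r γ P (v π P) = v π P) :
    ∃ f : S → A, ∀ μ ∈ stdSimplex ℝ S,
      minOver US (fun P => ∑ s, μ s * v (fun s a => if a = f s then (1 : ℝ) else 0) P s) =
        maxOver {π : List (S × A) → S → A → ℝ | IsHPolicy π}
          (fun π => minOver US (fun P => ∑ s, μ s * vHH π (fun _ => P) r γ s)) := by
  have hopt := contractingWith_optOp hne hker hcpt r hγ0 hγ1
  set vstar := ContractingWith.fixedPoint _ hopt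
  have hvstar : optOp US r γ vstar = vstar := hopt.fixedPoint_isFixedPt
  choose f hf using exists_optOp_eq US r γ vstar
  refine ⟨f, fun μ hμ => ?_⟩
  set πf : S → A → ℝ := fun s a => if a = f s then 1 else 0
  have hπf : IsPolicy πf := fun s => ⟨fun a => by positivity, by simp [πf]⟩
  have hvalue := hwsa πf hπf r hr γ hγ0 hγ1 (v πf) (hv πf hπf) vstar
    (TpiHat_ite_eq hne hker hcpt hr hγ0 fun s => (hf s).trans (congrFun hvstar s)) μ hμ
  obtain ⟨Phat, hPhat, hPhat_min⟩ := hwsa.weakSSPsa hne hker hcpt vstar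
  have hbellman := sum_mul_add_mul_le_of_optOp_eq hne hr hγ0 hvstar (hker Phat hPhat) hPhat_min
  have hstationary : minOver US (fun P => ∑ s, μ s * vHH (fun _ => πf) (fun _ => P) r γ s) =
      ∑ s, μ s * vstar s := by
    rw [← hvalue]
    exact minOver_congr fun P hP => by
      rw [vHH_const_eq_of_isFixedPt hπf (hker P hP) hγ0 hγ1 (hv πf hπf P hP)]
  have hgreatest : IsGreatest ((fun π => minOver US fun P => ∑ s, μ s * vHH π (fun _ => P) r γ s) ''
      {π | IsHPolicy π}) (∑ s, μ s * vstar s) := by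
    refine ⟨⟨_, fun _ s => hπf s, hstationary⟩, ?_⟩
    rintro _ ⟨π, hπ, rfl⟩
    exact minOver_sum_mul_vHH_le hμ hπ hker hγ0 hγ1 hPhat hbellman
  rw [hvalue, maxOver, hgreatest.csSup_eq]

theorem stmt17 {S A : Type*} [Fintype S] [Fintype A] [Nonempty S] [Nonempty A] [DecidableEq A]
    (US : Set (S → A → S → ℝ)) (hne : US.Nonempty) (hker : ∀ P ∈ US, IsKernel P)
    (hcpt : IsCompact US) (hconv : Convex ℝ US) (hwsa : WeakSATractable US)
    (r : S → A → S → ℝ) (hr : NextStateIndep r) (γ : ℝ) (hγ0 : 0 ≤ γ) (hγ1 : γ < 1)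
    (v : (S → A → ℝ) → (S → A → S → ℝ) → S → ℝ)
    (hv : ∀ π : S → A → ℝ, IsPolicy π → ∀ P ∈ US, TpiP π r γ P (v π P) = v π P) :
    ∃ f : S → A, ∀ μ ∈ stdSimplex ℝ S,
      minOver US (fun P => ∑ s, μ s * v (fun s a => if a = f s then (1 : ℝ) else 0) P s) =
        maxOver {π : List (S × A) → S → A → ℝ | IsHPolicy π}
          (fun π => minOver US (fun P => ∑ s, μ s * vHH π (fun _ => P) r γ s)) :=
  stmt17_general US hne hker hcpt hwsa r hr γ hγ0 hγ1 v hv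

end RMDP
end

section
/- Let S and A be nonempty finite sets, let m ≥ 1, let W^1,…,W^m ⊆ Δ(S) be nonempty compact sets, and fix coefficients u_{sa} ∈ Δ({1,…,m}) for each (s,a) ∈ S×A. Let 𝒫 = {(∑_{i=1}^m u^i_{sa} w^i)_{(s,a)∈S×A} : w^i ∈ W^i for each i} be the associated r-rectangular uncertainty set. Then 𝒫 is compact, 𝒫 satisfies the weak sa-SSP, and hence 𝒫 is weakly sa-tractable. -/
/-!
Rows of an r-rectangular set are fixed convex combinations `∑ i, u s a i • w i` of independent
choices `w i ∈ W i`, so minimizing `P s a ⬝ᵥ V` decouples into minimizing `w ⬝ᵥ V` over each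
compact `W i`, and one minimizer serves every `(s, a)`: this is the weak sa-SSP.

Given the weak sa-SSP, let `P*` minimize every row against `û`. With next-state-independent
rewards `P*` also minimizes every row of the robust Bellman operator, so `û` is the fixed point
of `T_{P*}`, i.e. `û = v^{P*}`; and `û ≤ T_P û` for every `P` gives `û ≤ v^P` by the comparison
principle for the contraction `T_P`.
-/

open scoped BigOperators

section Simplex

variable {X : Type*} [Fintype X]

theorem sum_mul_le_of_mem_stdSimplex {p f : X → ℝ} (hp : p ∈ stdSimplex ℝ X) {M : ℝ}
    (hf : ∀ x, f x ≤ M) : ∑ x, p x * f x ≤ M :=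
  calc ∑ x, p x * f x ≤ ∑ x, p x * M :=
        Finset.sum_le_sum fun x _ => mul_le_mul_of_nonneg_left (hf x) (hp.1 x)
    _ = M := by rw [← Finset.sum_mul, hp.2, one_mul]

theorem sum_mul_eq_of_mem_stdSimplex {p q c : X → ℝ} (hp : p ∈ stdSimplex ℝ X)
    (hq : q ∈ stdSimplex ℝ X) (hc : ∀ x y, c x = c y) :
    ∑ x, p x * c x = ∑ x, q x * c x := by
  obtain ⟨x₀, -⟩ : (Finset.univ : Finset X).Nonempty :=
    Finset.nonempty_of_sum_ne_zero (by rw [hp.2]; exact one_ne_zero)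
  have hconst : ∀ p ∈ stdSimplex ℝ X, ∑ x, p x * c x = c x₀ := fun p hp => by
    rw [Finset.sum_congr rfl fun x _ => by rw [hc x x₀], ← Finset.sum_mul, hp.2, one_mul]
  rw [hconst p hp, hconst q hq]

theorem sum_mul_const_add_le_of_mem_stdSimplex {p q c V : X → ℝ} (hp : p ∈ stdSimplex ℝ X)
    (hq : q ∈ stdSimplex ℝ X) (hc : ∀ x y, c x = c y) {γ : ℝ} (hγ : 0 ≤ γ)
    (h : ∑ x, p x * V x ≤ ∑ x, q x * V x) :
    ∑ x, p x * (c x + γ * V x) ≤ ∑ x, q x * (c x + γ * V x) := by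
  simp only [mul_add, Finset.sum_add_distrib, mul_left_comm _ γ, ← Finset.mul_sum]
  rw [sum_mul_eq_of_mem_stdSimplex hp hq hc]
  gcongr

end Simplex

namespace RMDP

variable {S A : Type*}

theorem minOver_eq_of_forall_le_s18 {K : Type*} {K0 : Set K} {f : K → ℝ} {x : K} (hx : x ∈ K0)
    (h : ∀ y ∈ K0, f x ≤ f y) : minOver K0 f = f x :=
  IsLeast.csInf_eq ⟨⟨x, hx, rfl⟩, by rintro _ ⟨y, hy, rfl⟩; exact h y hy⟩

section Evaluation

variable [Fintype S] [Fintype A]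

theorem TpiP_sub_TpiP (π : S → A → ℝ) (r : S → A → S → ℝ) (γ : ℝ) (P : S → A → S → ℝ)
    (f g : S → ℝ) (s : S) :
    TpiP π r γ P f s - TpiP π r γ P g s
      = γ * ∑ a, π s a * ∑ s', P s a s' * (f s' - g s') := by
  simp only [TpiP, ← Finset.sum_sub_distrib, ← mul_sub, Finset.mul_sum]
  exact Finset.sum_congr rfl fun a _ => Finset.sum_congr rfl fun s' _ => by ring

theorem le_of_le_TpiP_of_TpiP_le {π : S → A → ℝ} (hπ : IsPolicy π) {P : S → A → S → ℝ}
    (hP : IsKernel P) (r : S → A → S → ℝ) {γ : ℝ} (hγ0 : 0 ≤ γ) (hγ1 : γ < 1) {f g : S → ℝ}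
    (hf : ∀ s, f s ≤ TpiP π r γ P f s) (hg : ∀ s, TpiP π r γ P g s ≤ g s) (s : S) :
    f s ≤ g s := by
  by_contra! hlt
  have : Nonempty S := ⟨s⟩
  obtain ⟨s₀, hs₀⟩ := Finite.exists_max fun s => f s - g s
  have hcontract : f s₀ - g s₀ ≤ γ * (f s₀ - g s₀) :=
    calc f s₀ - g s₀ ≤ TpiP π r γ P f s₀ - TpiP π r γ P g s₀ := by linarith [hf s₀, hg s₀]
      _ = γ * ∑ a, π s₀ a * ∑ s', P s₀ a s' * (f s' - g s') := TpiP_sub_TpiP ..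
      _ ≤ γ * (f s₀ - g s₀) := mul_le_mul_of_nonneg_left (sum_mul_le_of_mem_stdSimplex (hπ s₀)
          fun a => sum_mul_le_of_mem_stdSimplex (hP s₀ a) hs₀) hγ0
  nlinarith [hs₀ s]

theorem weakSATractable_of_weakSSPsa {US : Set (S → A → S → ℝ)} (hK : ∀ P ∈ US, IsKernel P)
    (hSSP : WeakSSPsa US) : WeakSATractable US := by
  intro π hπ r hr γ hγ0 hγ1 v hv uhat huhat μ hμ
  obtain ⟨Pstar, hPstar, hmin⟩ := hSSP uhat
  have hrow : ∀ s a, ∀ P ∈ US, ∑ s', Pstar s a s' * (r s a s' + γ * uhat s')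
      ≤ ∑ s', P s a s' * (r s a s' + γ * uhat s') := fun s a P hP =>
    sum_mul_const_add_le_of_mem_stdSimplex (hK _ hPstar s a) (hK P hP s a) (hr s a) hγ0
      (hmin s a P hP)
  have hfix : TpiP π r γ Pstar uhat = uhat := by
    refine Eq.trans (funext fun s => Finset.sum_congr rfl fun a _ => ?_) huhat
    rw [minOver_eq_of_forall_le_s18 hPstar (hrow s a)]
  have hsub : ∀ P ∈ US, ∀ s, uhat s ≤ TpiP π r γ P uhat s := fun P hP s =>
    calc uhat s = TpiP π r γ Pstar uhat s := (congrFun hfix s).symm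
      _ ≤ TpiP π r γ P uhat s := Finset.sum_le_sum fun a _ =>
          mul_le_mul_of_nonneg_left (hrow s a P hP) ((hπ s).1 a)
  have hle : ∀ P ∈ US, ∀ s, uhat s ≤ v P s := fun P hP =>
    le_of_le_TpiP_of_TpiP_le hπ (hK P hP) r hγ0 hγ1 (hsub P hP) fun s =>
      (congrFun (hv P hP) s).le
  have hge : ∀ s, v Pstar s ≤ uhat s :=
    le_of_le_TpiP_of_TpiP_le hπ (hK _ hPstar) r hγ0 hγ1 (fun s => (congrFun (hv _ hPstar) s).ge)
      fun s => (congrFun hfix s).le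
  rw [minOver_eq_of_forall_le_s18 hPstar fun P hP => Finset.sum_le_sum fun s _ =>
    mul_le_mul_of_nonneg_left ((hge s).trans (hle P hP s)) (hμ.1 s)]
  exact Finset.sum_congr rfl fun s _ => by rw [le_antisymm (hge s) (hle _ hPstar s)]

end Evaluation

section RRectangular

variable {ι : Type*} [Fintype ι]

def rRectangular (W : ι → Set (S → ℝ)) (u : S → A → ι → ℝ) : Set (S → A → S → ℝ) :=
  (fun w s a => ∑ i, u s a i • w i) '' Set.univ.pi W

theorem mem_rRectangular {W : ι → Set (S → ℝ)} {u : S → A → ι → ℝ} {P : S → A → S → ℝ} :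
    P ∈ rRectangular W u ↔ ∃ w : ι → S → ℝ,
      (∀ i, w i ∈ W i) ∧ ∀ (s : S) (a : A), P s a = fun s' => ∑ i, u s a i * w i s' := by
  simp only [rRectangular, Set.mem_image, Set.mem_univ_pi]
  refine exists_congr fun w => and_congr_right fun _ => ?_
  simp only [funext_iff, Finset.sum_apply, Pi.smul_apply, smul_eq_mul]
  exact ⟨fun h s a s' => (h s a s').symm, fun h s a s' => (h s a s').symm⟩

theorem isCompact_rRectangular {W : ι → Set (S → ℝ)} (hW : ∀ i, IsCompact (W i))
    (u : S → A → ι → ℝ) : IsCompact (rRectangular W u) :=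
  (isCompact_univ_pi hW).image (by fun_prop)

theorem isKernel_of_mem_rRectangular [Fintype S] {W : ι → Set (S → ℝ)}
    (hW : ∀ i, W i ⊆ stdSimplex ℝ S) {u : S → A → ι → ℝ} (hu : ∀ s a, u s a ∈ stdSimplex ℝ ι) :
    ∀ P ∈ rRectangular W u, IsKernel P := by
  rintro _ ⟨w, hw, rfl⟩ s a
  exact (convex_stdSimplex ℝ S).sum_mem (fun i _ => (hu s a).1 i) (hu s a).2
    fun i _ => hW i (hw i trivial)

theorem weakSSPsa_rRectangular [Fintype S] {W : ι → Set (S → ℝ)}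
    (hne : ∀ i, (W i).Nonempty) (hW : ∀ i, IsCompact (W i)) {u : S → A → ι → ℝ}
    (hu : ∀ s a i, 0 ≤ u s a i) : WeakSSPsa (rRectangular W u) := by
  intro V
  have hminimizer : ∀ i, ∃ w ∈ W i, ∀ w' ∈ W i, w ⬝ᵥ V ≤ w' ⬝ᵥ V := fun i => by
    obtain ⟨w, hw, hmin⟩ := (hW i).exists_isMinOn (hne i)
      (by fun_prop : Continuous (· ⬝ᵥ V)).continuousOn
    exact ⟨w, hw, isMinOn_iff.mp hmin⟩
  choose w hw hmin using hminimizer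
  refine ⟨_, ⟨w, fun i _ => hw i, rfl⟩, ?_⟩
  rintro s a _ ⟨w', hw', rfl⟩
  change (∑ i, u s a i • w i) ⬝ᵥ V ≤ (∑ i, u s a i • w' i) ⬝ᵥ V
  simp only [sum_dotProduct, smul_dotProduct, smul_eq_mul]
  exact Finset.sum_le_sum fun i _ =>
    mul_le_mul_of_nonneg_left (hmin i _ (hw' i trivial)) (hu s a i)

end RRectangular

theorem stmt18_general {S A : Type*} [Fintype S] [Fintype A]
    (m : ℕ)
    (W : Fin m → Set (S → ℝ))
    (hW : ∀ i, (W i).Nonempty ∧ IsCompact (W i) ∧ W i ⊆ stdSimplex ℝ S)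
    (u : S → A → Fin m → ℝ) (hu : ∀ (s : S) (a : A), u s a ∈ stdSimplex ℝ (Fin m))
    (US : Set (S → A → S → ℝ))
    (hUS : US = {P : S → A → S → ℝ | ∃ w : Fin m → S → ℝ,
      (∀ i, w i ∈ W i) ∧ ∀ (s : S) (a : A), P s a = fun s' => ∑ i, u s a i * w i s'}) :
    IsCompact US ∧ WeakSSPsa US ∧ WeakSATractable US := by
  obtain rfl : US = rRectangular W u := by
    ext P
    rw [hUS, Set.mem_ofPred_eq, mem_rRectangular]
  have hSSP := weakSSPsa_rRectangular (fun i => (hW i).1) (fun i => (hW i).2.1)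
    fun s a => (hu s a).1
  exact ⟨isCompact_rRectangular (fun i => (hW i).2.1) u, hSSP,
    weakSATractable_of_weakSSPsa (isKernel_of_mem_rRectangular (fun i => (hW i).2.2) hu) hSSP⟩

theorem stmt18 {S A : Type*} [Fintype S] [Fintype A] [Nonempty S] [Nonempty A]
    (m : ℕ) (hm : 1 ≤ m)
    (W : Fin m → Set (S → ℝ))
    (hW : ∀ i, (W i).Nonempty ∧ IsCompact (W i) ∧ W i ⊆ stdSimplex ℝ S)
    (u : S → A → Fin m → ℝ) (hu : ∀ (s : S) (a : A), u s a ∈ stdSimplex ℝ (Fin m))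
    (US : Set (S → A → S → ℝ))
    (hUS : US = {P : S → A → S → ℝ | ∃ w : Fin m → S → ℝ,
      (∀ i, w i ∈ W i) ∧ ∀ (s : S) (a : A), P s a = fun s' => ∑ i, u s a i * w i s'}) :
    IsCompact US ∧ WeakSSPsa US ∧ WeakSATractable US :=
  stmt18_general m W hW u hu US hUS

end RMDP
end
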